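/- arXiv:1406.6167 — 6 statements merged into one kernel-verified Lean document; each statement's English description precedes it below -/
import Mathlib

section
/- The digraph contains a spanning tree if and only if 0 is a simple eigenvalue of the Laplacian ℒ, i.e., 0 is a root of the characteristic polynomial of ℒ of algebraic multiplicity exactly 1 (moreover the all-ones vector 𝟏 is always a right eigenvector for 0, since ℒ𝟏 = 0). -/
/-!
Let `L_r` be the Laplacian `L` with its `r`-th row replaced by the unit row `e_r`, so that
`det L_r` is the principal minor of `L` at `r`. Differentiating `det (X - L)` by the Leibniz
formula gives `coeff 1 (charpoly L) = ± ∑ r, det L_r`, while `L 𝟏 = 0` kills the constant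
coefficient; so `0` is a simple root iff `∑ r, det L_r ≠ 0`.

If `r` reaches every vertex, a maximum principle (a vector vanishing at `r` that is, elsewhere,
a weighted mean of its in-neighbours must vanish) shows that `t + L_r` is invertible for all
`t ≥ 0`; since `det (t + L_r)` is monic in `t`, it follows that `det L_r > 0`. If `r` misses
some vertex, no edge enters the unreachable vertices from the reachable ones, so `L_r` is block
triangular with a diagonal block whose rows sum to zero, and `det L_r = 0`. Hence the sum is
nonzero exactly when a root exists.
-/

open Matrix Polynomial

/-- A digraph given by adjacency matrix `Adj` (where `Adj i j = 1` means there is an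
edge from `j` to `i`) contains a spanning tree: some root vertex reaches every
vertex along directed edges. -/
def ContainsSpanningTree {M : ℕ} (Adj : Matrix (Fin M) (Fin M) ℝ) : Prop :=
  ∃ r : Fin M, ∀ i : Fin M, Relation.ReflTransGen (fun u v => Adj v u = 1) r i

theorem Polynomial.rootMultiplicity_zero_eq_one_iff {R : Type*} [CommRing R] (p : R[X]) :
    p.rootMultiplicity 0 = 1 ↔ p.coeff 0 = 0 ∧ p.coeff 1 ≠ 0 := by
  rw [rootMultiplicity_eq_natTrailingDegree']
  constructor
  · intro h
    have hp : p ≠ 0 := by rintro rfl; simp at h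
    refine ⟨coeff_eq_zero_of_lt_natTrailingDegree (by omega), ?_⟩
    rw [← h]
    exact trailingCoeff_nonzero_iff_nonzero.2 hp
  · rintro ⟨h0, h1⟩
    have hp : p ≠ 0 := by rintro rfl; simp at h1
    refine le_antisymm (natTrailingDegree_le_of_ne_zero h1) (le_natTrailingDegree hp ?_)
    intro m hm
    rwa [Nat.lt_one_iff.1 hm]

theorem Polynomial.Monic.eval_pos_of_forall_ge_eval_ne_zero {p : ℝ[X]} (hp : p.Monic) {a : ℝ}
    (h : ∀ t, a ≤ t → p.eval t ≠ 0) : 0 < p.eval a := by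
  rcases Nat.eq_zero_or_pos p.natDegree with hdeg | hdeg
  · simp [(Monic.natDegree_eq_zero hp).1 hdeg]
  refine (h a le_rfl).lt_or_gt.resolve_left fun hneg => ?_
  have htend := tendsto_atTop_of_leadingCoeff_nonneg p (natDegree_pos_iff_degree_pos.1 hdeg)
    (by rw [hp.leadingCoeff]; exact zero_le_one)
  obtain ⟨T, hT, haT⟩ :=
    ((htend.eventually_ge_atTop 0).and (Filter.eventually_ge_atTop a)).exists
  obtain ⟨c, hc, hroot⟩ :=
    intermediate_value_Icc haT p.continuous.continuousOn ⟨hneg.le, hT⟩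
  exact h c hc.1 hroot

theorem Matrix.charpoly_coeff_one_eq_trace_adjugate {R n : Type*} [CommRing R] [Fintype n]
    [DecidableEq n] (M : Matrix n n R) :
    M.charpoly.coeff 1 = (adjugate (-M)).trace := by
  have hentry : ∀ i j, charmatrix M i j = C ((1 : Matrix n n R) i j) * X + C (-M i j) := by
    intro i j
    obtain rfl | hij := eq_or_ne i j
    · simp [charmatrix_apply_eq, sub_eq_add_neg]
    · simp [charmatrix_apply_ne _ _ _ hij, one_apply_ne hij]
  have hcol : ∀ (i : n) (σ : Equiv.Perm n),
      ∏ j, ((-M).updateCol i (Pi.single i 1)) (σ j) j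
        = (∏ j ∈ Finset.univ.erase i, (-M) (σ j) j) * (1 : Matrix n n R) (σ i) i := by
    intro i σ
    rw [← Finset.prod_erase_mul _ _ (Finset.mem_univ i), updateCol_self, Pi.single_apply,
      one_apply]
    congr 1
    exact Finset.prod_congr rfl fun j hj => updateCol_ne (Finset.ne_of_mem_erase hj)
  have hdiag : ∀ i, adjugate (-M) i i = ((-M).updateCol i (Pi.single i 1)).det := by
    intro i
    rw [← transpose_apply (adjugate _), adjugate_transpose, adjugate_apply, updateRow_transpose,
      det_transpose]
  have hcoeff : M.charpoly.coeff 1 = (derivative M.charpoly).eval 0 := by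
    rw [← coeff_zero_eq_eval_zero, coeff_derivative]; simp
  rw [hcoeff, charpoly, det_apply', trace]
  simp only [derivative_sum, derivative_intCast_mul, derivative_prod_finset, hentry, diag_apply,
    hdiag, det_apply', hcol, derivative_add, derivative_C_mul_X, derivative_C, add_zero,
    eval_finsetSum, eval_mul, eval_prod, eval_add, eval_C, eval_X, mul_zero, zero_add,
    eval_intCast, Finset.mul_sum, neg_apply]
  exact Finset.sum_comm

theorem abs_eq_of_mul_eq_sum_mul {ι : Type*} [Fintype ι] {a y : ι → ℝ} {t c : ℝ}
    (ha : ∀ j, 0 ≤ a j) (ht : 0 ≤ t) (hmax : ∀ j, |y j| ≤ |c|)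
    (h : (∑ j, a j + t) * c = ∑ j, a j * y j) {j : ι} (hj : a j ≠ 0) : |y j| = |c| := by
  have hle : (∑ j, a j + t) * |c| ≤ ∑ j, a j * |y j| := by
    calc (∑ j, a j + t) * |c| = |∑ j, a j * y j| := by
          rw [← h, abs_mul, abs_of_nonneg (add_nonneg (Finset.sum_nonneg fun j _ => ha j) ht)]
      _ ≤ ∑ j, |a j * y j| := Finset.abs_sum_le_sum_abs _ _
      _ = ∑ j, a j * |y j| := by simp only [abs_mul, abs_of_nonneg (ha _)]
  have hgap : ∑ j, a j * (|c| - |y j|) = 0 := by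
    refine le_antisymm ?_ (Finset.sum_nonneg fun j _ => mul_nonneg (ha j) (sub_nonneg.2 (hmax j)))
    simp only [mul_sub, Finset.sum_sub_distrib, ← Finset.sum_mul]
    nlinarith [abs_nonneg c]
  have := (Finset.sum_eq_zero_iff_of_nonneg fun j _ =>
    mul_nonneg (ha j) (sub_nonneg.2 (hmax j))).1 hgap j (Finset.mem_univ j)
  linarith [(mul_eq_zero.1 this).resolve_left hj]

namespace Matrix

variable {n : Type*}

def Reaches {R : Type*} [Zero R] (A : Matrix n n R) : n → n → Prop :=
  Relation.ReflTransGen fun u v => A v u ≠ 0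

theorem ne_of_not_reaches {R : Type*} [Zero R] {A : Matrix n n R} {r i : n}
    (h : ¬ Reaches A r i) : i ≠ r := by
  rintro rfl
  exact h Relation.ReflTransGen.refl

variable [Fintype n] [DecidableEq n]

section CommRing

variable {R : Type*} [CommRing R]

theorem det_eq_zero_of_mulVec_one_eq_zero [Nonempty n] {M : Matrix n n R}
    (h : M *ᵥ (fun _ => 1) = 0) : M.det = 0 := by
  have := congrArg (adjugate M *ᵥ ·) h
  simp only [mulVec_mulVec, adjugate_mul, smul_mulVec, one_mulVec, mulVec_zero] at this
  simpa using congrFun this (Classical.arbitrary n)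

def laplacian (A : Matrix n n R) : Matrix n n R := diagonal (fun i => ∑ j, A i j) - A

def groundedLaplacian (A : Matrix n n R) (r : n) : Matrix n n R :=
  (laplacian A).updateRow r (Pi.single r 1)

variable (A : Matrix n n R)

theorem laplacian_apply_of_ne {i j : n} (h : i ≠ j) : laplacian A i j = -A i j := by
  simp [laplacian, diagonal_apply_ne _ h]

theorem laplacian_mulVec_apply (y : n → R) (i : n) :
    (laplacian A *ᵥ y) i = (∑ j, A i j) * y i - ∑ j, A i j * y j := by
  rw [laplacian, sub_mulVec, Pi.sub_apply, mulVec_diagonal]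
  rfl

theorem laplacian_mulVec_one : laplacian A *ᵥ (fun _ => 1) = 0 := by
  ext i
  simp [laplacian_mulVec_apply]

theorem charpoly_laplacian_coeff_zero [Nonempty n] : (laplacian A).charpoly.coeff 0 = 0 := by
  rw [coeff_zero_eq_eval_zero, eval_charpoly, map_zero, zero_sub]
  exact det_eq_zero_of_mulVec_one_eq_zero (by rw [neg_mulVec, laplacian_mulVec_one, neg_zero])

theorem charpoly_laplacian_coeff_one :
    (laplacian A).charpoly.coeff 1
      = (-1) ^ (Fintype.card n - 1) * ∑ r, (groundedLaplacian A r).det := by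
  rw [charpoly_coeff_one_eq_trace_adjugate, ← neg_one_smul R (laplacian A), adjugate_smul,
    trace_smul, smul_eq_mul, trace]
  simp only [diag_apply, adjugate_apply, groundedLaplacian]

theorem groundedLaplacian_mulVec_apply_self (r : n) (y : n → R) :
    (groundedLaplacian A r *ᵥ y) r = y r := by
  simp [groundedLaplacian, mulVec, single_dotProduct]

theorem groundedLaplacian_mulVec_apply_of_ne {r i : n} (h : i ≠ r) (y : n → R) :
    (groundedLaplacian A r *ᵥ y) i = (laplacian A *ᵥ y) i := by
  simp [groundedLaplacian, mulVec, updateRow_ne h]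

theorem det_groundedLaplacian_eq_zero {r : n} (hr : ¬ ∀ i, Reaches A r i) :
    (groundedLaplacian A r).det = 0 := by
  classical
  obtain ⟨i₀, hi₀⟩ := not_forall.1 hr
  have hblock :
      ∀ i, ¬ Reaches A r i → ∀ j, Reaches A r j → groundedLaplacian A r i j = 0 := by
    intro i hi j hj
    have hij : i ≠ j := by rintro rfl; exact hi hj
    rw [groundedLaplacian, updateRow_ne (ne_of_not_reaches hi), laplacian_apply_of_ne A hij,
      neg_eq_zero]
    exact not_not.1 fun hA => hi (hj.tail hA)
  rw [twoBlockTriangular_det _ _ hblock]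
  have : Nonempty {i // ¬ Reaches A r i} := ⟨⟨i₀, hi₀⟩⟩
  refine mul_eq_zero_of_right _ (det_eq_zero_of_mulVec_one_eq_zero ?_)
  ext ⟨i, hi⟩
  have hsum : ∑ j, laplacian A i j = 0 := by
    simpa [mulVec, dotProduct] using congrFun (laplacian_mulVec_one A) i
  have hrow : ∀ j, laplacian A i j = groundedLaplacian A r i j := fun j => by
    rw [groundedLaplacian, updateRow_ne (ne_of_not_reaches hi)]
  have hreach : ∑ j : {j // Reaches A r j}, laplacian A i j = 0 :=
    Finset.sum_eq_zero fun j _ => (hrow j).trans (hblock i hi j j.2)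
  rw [← Fintype.sum_subtype_add_sum_subtype (Reaches A r), hreach, zero_add] at hsum
  simpa [mulVec, dotProduct, toSquareBlockProp_def, hrow] using hsum

end CommRing

section Real

variable {A : Matrix n n ℝ}

theorem eq_zero_of_scalar_add_groundedLaplacian_mulVec_eq_zero (hA : ∀ i j, 0 ≤ A i j)
    {r : n} (hr : ∀ i, Reaches A r i) {t : ℝ} (ht : 0 ≤ t) {y : n → ℝ}
    (hy : (scalar n t + groundedLaplacian A r) *ᵥ y = 0) : y = 0 := by
  have hrow : ∀ i, t * y i + (groundedLaplacian A r *ᵥ y) i = 0 := fun i => by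
    simpa [add_mulVec, scalar_apply, mulVec_diagonal] using congrFun hy i
  have hyr : y r = 0 := by
    have := hrow r
    rw [groundedLaplacian_mulVec_apply_self] at this
    nlinarith
  have hmean : ∀ i, i ≠ r → (∑ j, A i j + t) * y i = ∑ j, A i j * y j := fun i hi => by
    have := hrow i
    rw [groundedLaplacian_mulVec_apply_of_ne A hi, laplacian_mulVec_apply] at this
    linarith
  obtain ⟨i₀, -, hi₀⟩ :=
    Finset.exists_max_image Finset.univ (fun i => |y i|) ⟨r, Finset.mem_univ r⟩
  have hmax : ∀ j, |y j| ≤ |y i₀| := fun j => hi₀ j (Finset.mem_univ j)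
  have hmax_zero : ∀ i, Reaches A r i → |y i| = |y i₀| → y i₀ = 0 := by
    intro i hi
    induction hi with
    | refl => intro h; rwa [hyr, abs_zero, eq_comm, abs_eq_zero] at h
    | @tail b c _ hbc ih =>
      intro hc
      by_cases hcr : c = r
      · subst hcr; rwa [hyr, abs_zero, eq_comm, abs_eq_zero] at hc
      · exact ih ((abs_eq_of_mul_eq_sum_mul (hA c) ht (hc ▸ hmax) (hmean c hcr) hbc).trans hc)
  have hy₀ := hmax_zero i₀ (hr i₀) rfl
  ext i
  simpa [hy₀] using hmax i

theorem det_groundedLaplacian_pos (hA : ∀ i j, 0 ≤ A i j) {r : n} (hr : ∀ i, Reaches A r i) :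
    0 < (groundedLaplacian A r).det := by
  have hpos := (charpoly_monic (-groundedLaplacian A r)).eval_pos_of_forall_ge_eval_ne_zero
    (a := 0) fun t ht hdet => by
      rw [eval_charpoly, sub_neg_eq_add, ← exists_mulVec_eq_zero_iff] at hdet
      obtain ⟨y, hy0, hy⟩ := hdet
      exact hy0 (eq_zero_of_scalar_add_groundedLaplacian_mulVec_eq_zero hA hr ht hy)
  rwa [eval_charpoly, map_zero, zero_sub, neg_neg] at hpos

theorem det_groundedLaplacian_nonneg (hA : ∀ i j, 0 ≤ A i j) (r : n) :
    0 ≤ (groundedLaplacian A r).det := by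
  by_cases hr : ∀ i, Reaches A r i
  · exact (det_groundedLaplacian_pos hA hr).le
  · exact (det_groundedLaplacian_eq_zero A hr).ge

theorem exists_forall_reaches_iff_rootMultiplicity_charpoly_laplacian (hA : ∀ i j, 0 ≤ A i j) :
    (∃ r, ∀ i, Reaches A r i) ↔ (laplacian A).charpoly.rootMultiplicity 0 = 1 := by
  rw [rootMultiplicity_zero_eq_one_iff, charpoly_laplacian_coeff_one]
  constructor
  · rintro ⟨r, hr⟩
    have : Nonempty n := ⟨r⟩
    refine ⟨charpoly_laplacian_coeff_zero A, mul_ne_zero (pow_ne_zero _ (by norm_num)) ?_⟩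
    exact (Finset.sum_pos' (fun s _ => det_groundedLaplacian_nonneg hA s)
      ⟨r, Finset.mem_univ r, det_groundedLaplacian_pos hA hr⟩).ne'
  · rintro ⟨-, hsum⟩
    obtain ⟨r, -, hr⟩ := Finset.exists_ne_zero_of_sum_ne_zero (right_ne_zero_of_mul hsum)
    exact ⟨r, not_not.1 fun h => hr (det_groundedLaplacian_eq_zero A h)⟩

end Real

end Matrix

theorem stmt0_general (M : ℕ)
    (Adj : Matrix (Fin M) (Fin M) ℝ)
    (hA01 : ∀ i j, Adj i j = 0 ∨ Adj i j = 1)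
    (L : Matrix (Fin M) (Fin M) ℝ)
    (hL : L = Matrix.diagonal (fun i => ∑ j, Adj i j) - Adj) :
    (ContainsSpanningTree Adj ↔ Polynomial.rootMultiplicity 0 L.charpoly = 1) ∧
      L *ᵥ (fun _ => (1 : ℝ)) = 0 := by
  have hedge : (fun u v => Adj v u = 1) = fun u v => Adj v u ≠ 0 := by
    ext u v
    rcases hA01 v u with h | h <;> simp [h]
  have hA : ∀ i j, 0 ≤ Adj i j := fun i j => by rcases hA01 i j with h | h <;> simp [h]
  subst hL
  refine ⟨?_, laplacian_mulVec_one Adj⟩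
  rw [ContainsSpanningTree, hedge]
  exact exists_forall_reaches_iff_rootMultiplicity_charpoly_laplacian hA

theorem stmt0 (M : ℕ) (hM : 0 < M)
    (Adj : Matrix (Fin M) (Fin M) ℝ)
    (hA01 : ∀ i j, Adj i j = 0 ∨ Adj i j = 1)
    (hdiag : ∀ i, Adj i i = 0)
    (L : Matrix (Fin M) (Fin M) ℝ)
    (hL : L = Matrix.diagonal (fun i => ∑ j, Adj i j) - Adj) :
    (ContainsSpanningTree Adj ↔ Polynomial.rootMultiplicity 0 L.charpoly = 1) ∧
      L *ᵥ (fun _ => (1 : ℝ)) = 0 :=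
  stmt0_general M Adj hA01 L hL
end

section
/- Fix weights a_1,…,a_M ∈ {0,1} with d = Σ_{j=1}^M a_j ≥ 1, target vectors x_1,…,x_M ∈ ℝⁿ, and an initial state x₀ ∈ ℝⁿ. Consider minimizing, over control sequences û(0),…,û(N−1) ∈ ℝᵐ with predicted states x̂(n+1) = A x̂(n) + B û(n) and x̂(0) = x₀, the cost J = Σ_{n=0}^{N−1} ( û(n)ᵀRû(n) + Σ_{j=1}^M a_j (x̂(n) − x_j)ᵀQ(x̂(n) − x_j) ) + Σ_{j=1}^M a_j (x̂(N) − x_j)ᵀQ_N(x̂(N) − x_j). Then J has a unique global minimizer, given in feedback form by û*(n) = Σ_{j=1}^M a_j [K(n) x̂*(n) + G(n) x_j] for n = 0,…,N−1, where K(n) = −R⁻¹Bᵀ(I + d·P(n+1)BR⁻¹Bᵀ)⁻¹P(n+1)A and G(n) = −R⁻¹Bᵀ(I + d·P(n+1)BR⁻¹Bᵀ)⁻¹Δ(n+1), and P, Δ are the backward matrix recursions P(n) = Aᵀ(I + d·P(n+1)BR⁻¹Bᵀ)⁻¹P(n+1)A + Q with P(N) = Q_N, and Δ(n) = Aᵀ(I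 + d·P(n+1)BR⁻¹Bᵀ)⁻¹Δ(n+1) − Q with Δ(N) = −Q_N. -/
open Matrix Polynomial

/-- Predicted state trajectory: `x̂(0) = x₀`, `x̂(k+1) = A x̂(k) + B û(k)`. -/
noncomputable def stateTraj {n m : ℕ} (A : Matrix (Fin n) (Fin n) ℝ)
    (B : Matrix (Fin n) (Fin m) ℝ) (x0 : Fin n → ℝ) (U : ℕ → Fin m → ℝ) : ℕ → Fin n → ℝ
  | 0 => x0
  | k + 1 => A *ᵥ stateTraj A B x0 U k + B *ᵥ U k

/-- Extension of a finite control sequence by zero. -/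
def extCtrl {m N : ℕ} (U : Fin N → Fin m → ℝ) : ℕ → Fin m → ℝ :=
  fun k => if h : k < N then U ⟨k, h⟩ else 0

/-- The finite-horizon cost
`J = Σ_{n=0}^{N−1} ( û(n)ᵀRû(n) + Σ_j a_j (x̂(n) − x_j)ᵀQ(x̂(n) − x_j) )
      + Σ_j a_j (x̂(N) − x_j)ᵀQ_N(x̂(N) − x_j)`. -/
noncomputable def rhcCost {n m M N : ℕ} (A : Matrix (Fin n) (Fin n) ℝ)
    (B : Matrix (Fin n) (Fin m) ℝ) (Q QN : Matrix (Fin n) (Fin n) ℝ)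
    (R : Matrix (Fin m) (Fin m) ℝ) (a : Fin M → ℝ) (x : Fin M → Fin n → ℝ)
    (x0 : Fin n → ℝ) (U : Fin N → Fin m → ℝ) : ℝ :=
  (∑ k : Fin N,
      ((U k) ⬝ᵥ (R *ᵥ U k) +
        ∑ j, a j *
          ((stateTraj A B x0 (extCtrl U) k - x j) ⬝ᵥ
            (Q *ᵥ (stateTraj A B x0 (extCtrl U) k - x j))))) +
    ∑ j, a j *
      ((stateTraj A B x0 (extCtrl U) N - x j) ⬝ᵥ
        (QN *ᵥ (stateTraj A B x0 (extCtrl U) N - x j)))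

/-!
Completing the square, stage by stage. Put `s = ∑ a_j x_j`, so that
`∑ a_j (z - x_j)ᵀQ(z - x_j) = d zᵀQz - 2 zᵀQs + const`, and let
`V_k(z) = d zᵀP(k)z + 2 zᵀΔ(k)s` and `T_k = R + d BᵀP(k+1)B`. The Riccati recursions are exactly
what makes

  `uᵀRu + ∑ a_j (z - x_j)ᵀQ(z - x_j) + V_{k+1}(Az + Bu) = (u - φ_k z)ᵀT_k(u - φ_k z) + V_k(z) + c_k`

hold with the claimed feedback `φ_k`: the Woodbury identity turns
`(I + d P(k+1)BR⁻¹Bᵀ)⁻¹` into `I - d P(k+1)BT_k⁻¹Bᵀ`, and the push-through identity turns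
`R⁻¹Bᵀ(I + d P(k+1)BR⁻¹Bᵀ)⁻¹` into `T_k⁻¹Bᵀ`. Summing along a trajectory telescopes, so the cost
of any control sequence is `∑_k (û(k) - φ_k x̂(k))ᵀT_k(û(k) - φ_k x̂(k))` plus a constant. Backward
induction shows that every `P(k)` is positive definite, hence so is every `T_k`; the closed-loop
controls make all squares vanish, while any other sequence makes the square at its first
deviation positive.
-/

open Finset

namespace Matrix

variable {n m : Type*} [Fintype n] [Fintype m]

theorem dotProduct_mulVec_comm_of_transpose_eq {M : Matrix n n ℝ} (hM : Mᵀ = M) (x y : n → ℝ) :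
    x ⬝ᵥ (M *ᵥ y) = y ⬝ᵥ (M *ᵥ x) := by
  conv_lhs => rw [← hM]
  exact dotProduct_transpose_mulVec M x y

theorem dotProduct_transpose_mulVec' (B : Matrix n m ℝ) (u : m → ℝ) (w : n → ℝ) :
    u ⬝ᵥ (Bᵀ *ᵥ w) = (B *ᵥ u) ⬝ᵥ w := by
  rw [dotProduct_transpose_mulVec, dotProduct_comm]

theorem dotProduct_mulVec_add_two_mul_eq_sub [DecidableEq m] {T : Matrix m m ℝ} (hT : Tᵀ = T)
    (hTu : IsUnit T) (u w : m → ℝ) :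
    u ⬝ᵥ (T *ᵥ u) + 2 * (u ⬝ᵥ w)
      = (u + T⁻¹ *ᵥ w) ⬝ᵥ (T *ᵥ (u + T⁻¹ *ᵥ w)) - w ⬝ᵥ (T⁻¹ *ᵥ w) := by
  have hTT : T *ᵥ (T⁻¹ *ᵥ w) = w := by
    rw [mulVec_mulVec, mul_nonsing_inv _ ((isUnit_iff_isUnit_det T).mp hTu), one_mulVec]
  rw [mulVec_add, hTT, add_dotProduct, dotProduct_add, dotProduct_add,
    dotProduct_mulVec_comm_of_transpose_eq hT (T⁻¹ *ᵥ w), hTT, dotProduct_comm (T⁻¹ *ᵥ w) w]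
  ring

theorem dotProduct_mulVec_affine_expand {P : Matrix n n ℝ} (hP : Pᵀ = P) (R : Matrix m m ℝ)
    (B : Matrix n m ℝ) (u : m → ℝ) (v t : n → ℝ) :
    u ⬝ᵥ (R *ᵥ u) + (v + B *ᵥ u) ⬝ᵥ (P *ᵥ (v + B *ᵥ u)) + 2 * ((v + B *ᵥ u) ⬝ᵥ t)
      = u ⬝ᵥ ((R + Bᵀ * P * B) *ᵥ u) + 2 * (u ⬝ᵥ (Bᵀ *ᵥ (P *ᵥ v + t)))
        + (v ⬝ᵥ (P *ᵥ v) + 2 * (v ⬝ᵥ t)) := by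
  rw [add_mulVec, ← mulVec_mulVec, ← mulVec_mulVec, dotProduct_add,
    dotProduct_transpose_mulVec', dotProduct_transpose_mulVec']
  simp only [mulVec_add, add_dotProduct, dotProduct_add]
  rw [dotProduct_mulVec_comm_of_transpose_eq hP (B *ᵥ u) v]
  ring

theorem dotProduct_mulVec_one_sub_mul_mul [DecidableEq n] {P M : Matrix n n ℝ} (hP : Pᵀ = P)
    (hM : Mᵀ = M) (v t : n → ℝ) :
    v ⬝ᵥ (((1 - P * M) * P) *ᵥ v) + 2 * (v ⬝ᵥ ((1 - P * M) *ᵥ t))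
      = v ⬝ᵥ (P *ᵥ v) + 2 * (v ⬝ᵥ t) - (P *ᵥ v + t) ⬝ᵥ (M *ᵥ (P *ᵥ v + t))
        + t ⬝ᵥ (M *ᵥ t) := by
  have hPM : ∀ w, v ⬝ᵥ ((P * M) *ᵥ w) = (P *ᵥ v) ⬝ᵥ (M *ᵥ w) := fun w => by
    rw [← mulVec_mulVec, dotProduct_mulVec_comm_of_transpose_eq hP, dotProduct_comm]
  rw [Matrix.sub_mul, Matrix.one_mul, sub_mulVec, sub_mulVec, one_mulVec, dotProduct_sub,
    dotProduct_sub, ← mulVec_mulVec, hPM, hPM, mulVec_add, dotProduct_add, add_dotProduct,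
    add_dotProduct, dotProduct_mulVec_comm_of_transpose_eq hM t (P *ᵥ v)]
  ring

variable [DecidableEq n] [DecidableEq m]

theorem inv_one_add_mul_mul_inv_mul {P : Matrix n n ℝ} {B : Matrix n m ℝ} {R : Matrix m m ℝ}
    {C : Matrix m n ℝ} (hR : IsUnit R) (hT : IsUnit (R + C * P * B)) :
    (1 + P * B * R⁻¹ * C)⁻¹ = 1 - P * B * (R + C * P * B)⁻¹ * C := by
  have hRR := nonsing_inv_nonsing_inv _ ((isUnit_iff_isUnit_det R).mp hR)
  rw [add_mul_mul_inv_eq_sub 1 (P * B) R⁻¹ C isUnit_one (isUnit_nonsing_inv_iff.mpr hR)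
    (by simpa [hRR, Matrix.mul_assoc] using hT)]
  simp [hRR, Matrix.mul_assoc]

theorem inv_mul_mul_inv_one_add_mul_mul_inv_mul {P : Matrix n n ℝ} {B : Matrix n m ℝ}
    {R : Matrix m m ℝ} {C : Matrix m n ℝ} (hR : IsUnit R) (hT : IsUnit (R + C * P * B)) :
    R⁻¹ * C * (1 + P * B * R⁻¹ * C)⁻¹ = (R + C * P * B)⁻¹ * C := by
  have hRR : R⁻¹ * R = 1 := nonsing_inv_mul _ ((isUnit_iff_isUnit_det R).mp hR)
  have hTT : (R + C * P * B) * (R + C * P * B)⁻¹ = 1 :=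
    mul_nonsing_inv _ ((isUnit_iff_isUnit_det _).mp hT)
  calc R⁻¹ * C * (1 + P * B * R⁻¹ * C)⁻¹
      = R⁻¹ * ((R + C * P * B) * (R + C * P * B)⁻¹) * C
        - R⁻¹ * (C * P * B) * (R + C * P * B)⁻¹ * C := by
        rw [inv_one_add_mul_mul_inv_mul hR hT, hTT]
        simp only [Matrix.mul_sub, Matrix.mul_one, Matrix.mul_assoc]
    _ = (R⁻¹ * R) * (R + C * P * B)⁻¹ * C := by
        simp only [Matrix.mul_add, Matrix.add_mul, Matrix.mul_assoc]; abel
    _ = (R + C * P * B)⁻¹ * C := by rw [hRR, Matrix.one_mul]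

theorem inv_one_add_smul_mul_mul_eq_inv_add {P : Matrix n n ℝ} {R : Matrix m m ℝ} {d : ℝ}
    (hP : IsUnit P) (B : Matrix n m ℝ) :
    (1 + d • (P * B * R⁻¹ * Bᵀ))⁻¹ * P = (P⁻¹ + d • (B * R⁻¹ * Bᵀ))⁻¹ := by
  have hPdet := (isUnit_iff_isUnit_det P).mp hP
  have hfactor : P⁻¹ + d • (B * R⁻¹ * Bᵀ) = P⁻¹ * (1 + d • (P * B * R⁻¹ * Bᵀ)) := by
    rw [Matrix.mul_add, Matrix.mul_one, Matrix.mul_smul]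
    simp only [← Matrix.mul_assoc, nonsing_inv_mul _ hPdet, Matrix.one_mul]
  rw [hfactor, Matrix.mul_inv_rev, nonsing_inv_nonsing_inv _ hPdet]

theorem PosDef.riccatiStep {P Q : Matrix n n ℝ} {R : Matrix m m ℝ} {d : ℝ} (hP : P.PosDef)
    (hQ : Q.PosDef) (hR : R.PosDef) (hd : 0 ≤ d) (A : Matrix n n ℝ) (B : Matrix n m ℝ) :
    (Aᵀ * (1 + d • (P * B * R⁻¹ * Bᵀ))⁻¹ * P * A + Q).PosDef := by
  have hS : (B * R⁻¹ * Bᵀ).PosSemidef := by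
    simpa using hR.inv.posSemidef.mul_mul_conjTranspose_same B
  have hWP : ((1 + d • (P * B * R⁻¹ * Bᵀ))⁻¹ * P).PosDef := by
    rw [inv_one_add_smul_mul_mul_eq_inv_add hP.isUnit]
    exact (hP.inv.add_posSemidef (hS.smul hd)).inv
  simpa [Matrix.mul_assoc] using
    PosDef.posSemidef_add (hWP.posSemidef.conjTranspose_mul_mul_same A) hQ

end Matrix

section RiccatiStep

variable {n m : Type*} [Fintype n] [Fintype m] [DecidableEq n] [DecidableEq m]
  {P : Matrix n n ℝ} {R : Matrix m m ℝ} {B : Matrix n m ℝ}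

theorem riccatiStep_completeSquare (hP : Pᵀ = P) (hR : Rᵀ = R) (hT : IsUnit (R + Bᵀ * P * B))
    (u : m → ℝ) (v t : n → ℝ) :
    let T := R + Bᵀ * P * B
    let W := 1 - P * B * T⁻¹ * Bᵀ
    let φ := -(T⁻¹ *ᵥ (Bᵀ *ᵥ (P *ᵥ v + t)))
    u ⬝ᵥ (R *ᵥ u) + (v + B *ᵥ u) ⬝ᵥ (P *ᵥ (v + B *ᵥ u)) + 2 * ((v + B *ᵥ u) ⬝ᵥ t)
      = (u - φ) ⬝ᵥ (T *ᵥ (u - φ)) + (v ⬝ᵥ ((W * P) *ᵥ v) + 2 * (v ⬝ᵥ (W *ᵥ t)))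
        - (Bᵀ *ᵥ t) ⬝ᵥ (T⁻¹ *ᵥ (Bᵀ *ᵥ t)) := by
  intro T W φ
  have hTt : Tᵀ = T := by simp [T, transpose_add, hR, hP, Matrix.mul_assoc]
  have hM : (B * T⁻¹ * Bᵀ)ᵀ = B * T⁻¹ * Bᵀ := by
    simp [transpose_nonsing_inv, hTt, Matrix.mul_assoc]
  have hMT : ∀ x y : n → ℝ, x ⬝ᵥ ((B * T⁻¹ * Bᵀ) *ᵥ y) = (Bᵀ *ᵥ x) ⬝ᵥ (T⁻¹ *ᵥ (Bᵀ *ᵥ y)) :=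
    fun x y => by rw [← mulVec_mulVec, ← mulVec_mulVec, dotProduct_mulVec, ← mulVec_transpose]
  have hW : W = 1 - P * (B * T⁻¹ * Bᵀ) := by simp only [W, Matrix.mul_assoc]
  rw [dotProduct_mulVec_affine_expand hP, dotProduct_mulVec_add_two_mul_eq_sub hTt hT, hW,
    dotProduct_mulVec_one_sub_mul_mul hP hM, hMT, hMT, sub_neg_eq_add]
  ring

end RiccatiStep

section DynamicProgramming

variable {n m : ℕ} (A : Matrix (Fin n) (Fin n) ℝ) (B : Matrix (Fin n) (Fin m) ℝ)
  (x0 : Fin n → ℝ)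

noncomputable def closedLoopTraj (φ : ℕ → (Fin n → ℝ) → Fin m → ℝ) : ℕ → Fin n → ℝ
  | 0 => x0
  | k + 1 => A *ᵥ closedLoopTraj φ k + B *ᵥ φ k (closedLoopTraj φ k)

variable {A B x0}

theorem stateTraj_congr {U U' : ℕ → Fin m → ℝ} {k : ℕ} (h : ∀ j < k, U j = U' j) :
    stateTraj A B x0 U k = stateTraj A B x0 U' k := by
  induction k with
  | zero => rfl
  | succ k ih =>
    rw [stateTraj, stateTraj, ih fun j hj => h j (Nat.lt_succ_of_lt hj), h k k.lt_succ_self]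

theorem stateTraj_eq_closedLoopTraj {φ : ℕ → (Fin n → ℝ) → Fin m → ℝ} {U : ℕ → Fin m → ℝ}
    {N : ℕ} (hU : ∀ k < N, U k = φ k (closedLoopTraj A B x0 φ k)) {k : ℕ} (hk : k ≤ N) :
    stateTraj A B x0 U k = closedLoopTraj A B x0 φ k := by
  induction k with
  | zero => rfl
  | succ k ih => rw [stateTraj, closedLoopTraj, ih (by omega), hU k (by omega)]

variable {N : ℕ} {f : ℕ → (Fin n → ℝ) → (Fin m → ℝ) → ℝ} {V : ℕ → (Fin n → ℝ) → ℝ}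
  {φ : ℕ → (Fin n → ℝ) → Fin m → ℝ} {T : ℕ → Matrix (Fin m) (Fin m) ℝ}

theorem exists_cost_eq_sum_completedSquares
    (h : ∀ k < N, ∃ c, ∀ z u, f k z u + V (k + 1) (A *ᵥ z + B *ᵥ u)
      = (u - φ k z) ⬝ᵥ (T k *ᵥ (u - φ k z)) + V k z + c) :
    ∃ C, ∀ U : ℕ → Fin m → ℝ,
      ∑ k ∈ range N, f k (stateTraj A B x0 U k) (U k) + V N (stateTraj A B x0 U N)
        = ∑ k ∈ range N, (U k - φ k (stateTraj A B x0 U k)) ⬝ᵥ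
            (T k *ᵥ (U k - φ k (stateTraj A B x0 U k))) + C := by
  induction N with
  | zero => exact ⟨V 0 x0, fun U => by simp [stateTraj]⟩
  | succ N ih =>
    obtain ⟨C, hC⟩ := ih fun k hk => h k (by omega)
    obtain ⟨c, hc⟩ := h N N.lt_succ_self
    refine ⟨C + c, fun U => ?_⟩
    rw [sum_range_succ, sum_range_succ, stateTraj, add_assoc, hc]
    linarith [hC U]

theorem cost_lt_of_ne_closedLoop
    (h : ∀ k < N, ∃ c, ∀ z u, f k z u + V (k + 1) (A *ᵥ z + B *ᵥ u)
      = (u - φ k z) ⬝ᵥ (T k *ᵥ (u - φ k z)) + V k z + c)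
    (hT : ∀ k < N, (T k).PosDef) {U Ustar : ℕ → Fin m → ℝ}
    (hUstar : ∀ k < N, Ustar k = φ k (closedLoopTraj A B x0 φ k))
    (hU : ∃ k < N, U k ≠ Ustar k) :
    ∑ k ∈ range N, f k (stateTraj A B x0 Ustar k) (Ustar k) + V N (stateTraj A B x0 Ustar N)
      < ∑ k ∈ range N, f k (stateTraj A B x0 U k) (U k) + V N (stateTraj A B x0 U N) := by
  classical
  obtain ⟨C, hC⟩ := exists_cost_eq_sum_completedSquares (x0 := x0) h
  rw [hC, hC, add_lt_add_iff_right]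
  have hzero : ∀ k ∈ range N, (Ustar k - φ k (stateTraj A B x0 Ustar k)) ⬝ᵥ
      (T k *ᵥ (Ustar k - φ k (stateTraj A B x0 Ustar k))) = 0 := fun k hk => by
    rw [stateTraj_eq_closedLoopTraj hUstar (mem_range.mp hk).le, ← hUstar k (mem_range.mp hk),
      sub_self, zero_dotProduct]
  rw [sum_eq_zero hzero]
  let k₀ := Nat.find hU
  obtain ⟨hk₀N, hk₀⟩ : k₀ < N ∧ U k₀ ≠ Ustar k₀ := Nat.find_spec hU
  have hstate : stateTraj A B x0 U k₀ = closedLoopTraj A B x0 φ k₀ := by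
    rw [stateTraj_congr (U' := Ustar) fun j hj => ?_, stateTraj_eq_closedLoopTraj hUstar hk₀N.le]
    by_contra hne
    exact Nat.find_min hU hj ⟨hj.trans hk₀N, hne⟩
  refine sum_pos' (fun k hk => (hT k (mem_range.mp hk)).posSemidef.dotProduct_mulVec_nonneg _)
    ⟨k₀, mem_range.mpr hk₀N, (hT k₀ hk₀N).dotProduct_mulVec_pos ?_⟩
  rw [hstate, ← hUstar k₀ hk₀N]
  exact sub_ne_zero.mpr hk₀

end DynamicProgramming

section Tracking

variable {n m ι : Type*} [Fintype n] [Fintype m] [Fintype ι]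

def trackingValue (d : ℝ) (P Δ : Matrix n n ℝ) (s z : n → ℝ) : ℝ :=
  d * (z ⬝ᵥ (P *ᵥ z)) + 2 * (z ⬝ᵥ (Δ *ᵥ s))

def trackingStageCost (Q : Matrix n n ℝ) (R : Matrix m m ℝ) (a : ι → ℝ) (x : ι → n → ℝ)
    (z : n → ℝ) (u : m → ℝ) : ℝ :=
  u ⬝ᵥ (R *ᵥ u) + ∑ j, a j * ((z - x j) ⬝ᵥ (Q *ᵥ (z - x j)))

theorem sum_mul_dotProduct_sub_mulVec_sub {Q : Matrix n n ℝ} (hQ : Qᵀ = Q) (a : ι → ℝ)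
    (x : ι → n → ℝ) (z : n → ℝ) :
    ∑ j, a j * ((z - x j) ⬝ᵥ (Q *ᵥ (z - x j)))
      = trackingValue (∑ j, a j) Q (-Q) (∑ j, a j • x j) z + ∑ j, a j * (x j ⬝ᵥ (Q *ᵥ x j)) := by
  have hterm : ∀ j, a j * ((z - x j) ⬝ᵥ (Q *ᵥ (z - x j)))
      = a j * (z ⬝ᵥ (Q *ᵥ z)) - 2 * (a j * (z ⬝ᵥ (Q *ᵥ x j))) + a j * (x j ⬝ᵥ (Q *ᵥ x j)) := by
    intro j
    rw [mulVec_sub, dotProduct_sub, sub_dotProduct, sub_dotProduct,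
      dotProduct_mulVec_comm_of_transpose_eq hQ (x j) z]
    ring
  have hcross : z ⬝ᵥ (Q *ᵥ ∑ j, a j • x j) = ∑ j, a j * (z ⬝ᵥ (Q *ᵥ x j)) := by
    simp only [mulVec_sum, mulVec_smul, dotProduct_sum, dotProduct_smul, smul_eq_mul]
  rw [sum_congr rfl fun j _ => hterm j, sum_add_distrib, sum_sub_distrib, ← sum_mul, ← mul_sum,
    trackingValue, neg_mulVec, dotProduct_neg, hcross]
  ring

variable [DecidableEq n] [DecidableEq m]

noncomputable def trackingFeedback (d : ℝ) (A : Matrix n n ℝ) (B : Matrix n m ℝ)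
    (R : Matrix m m ℝ) (P Δ : Matrix n n ℝ) (a : ι → ℝ) (x : ι → n → ℝ) (z : n → ℝ) : m → ℝ :=
  ∑ j, a j • ((-(R⁻¹ * Bᵀ * (1 + d • (P * B * R⁻¹ * Bᵀ))⁻¹ * P * A)) *ᵥ z +
    (-(R⁻¹ * Bᵀ * (1 + d • (P * B * R⁻¹ * Bᵀ))⁻¹ * Δ)) *ᵥ x j)

variable {d : ℝ} {A : Matrix n n ℝ} {B : Matrix n m ℝ} {R : Matrix m m ℝ} {a : ι → ℝ}

theorem trackingFeedback_eq {P Δ : Matrix n n ℝ} (hd : d = ∑ j, a j) (hR : IsUnit R)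
    (hT : IsUnit (R + Bᵀ * (d • P) * B)) (x : ι → n → ℝ) (z : n → ℝ) :
    trackingFeedback d A B R P Δ a x z
      = -((R + Bᵀ * (d • P) * B)⁻¹ *ᵥ (Bᵀ *ᵥ ((d • P) *ᵥ (A *ᵥ z) + Δ *ᵥ ∑ j, a j • x j))) := by
  have hgain : R⁻¹ * Bᵀ * (1 + d • (P * B * R⁻¹ * Bᵀ))⁻¹ = (R + Bᵀ * (d • P) * B)⁻¹ * Bᵀ := by
    simpa only [Matrix.smul_mul] using inv_mul_mul_inv_one_add_mul_mul_inv_mul (P := d • P) hR hT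
  have hstate : (R + Bᵀ * (d • P) * B)⁻¹ *ᵥ (Bᵀ *ᵥ ((d • P) *ᵥ (A *ᵥ z)))
      = d • (((R + Bᵀ * (d • P) * B)⁻¹ * Bᵀ * P * A) *ᵥ z) := by
    rw [smul_mulVec, mulVec_smul, mulVec_smul, mulVec_mulVec, mulVec_mulVec, mulVec_mulVec]
  have htarget : (R + Bᵀ * (d • P) * B)⁻¹ *ᵥ (Bᵀ *ᵥ (Δ *ᵥ ∑ j, a j • x j))
      = ∑ j, a j • (((R + Bᵀ * (d • P) * B)⁻¹ * Bᵀ * Δ) *ᵥ x j) := by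
    simp only [mulVec_mulVec, mulVec_sum, mulVec_smul, Matrix.mul_assoc]
  rw [trackingFeedback, hgain, mulVec_add, mulVec_add, hstate, htarget, hd]
  simp only [smul_add, sum_add_distrib, sum_smul, neg_mulVec, smul_neg, neg_add, sum_neg_distrib]

theorem trackingStageCost_add_trackingValue {Q P Δ Pnext Δnext : Matrix n n ℝ}
    (x : ι → n → ℝ) (hd : d = ∑ j, a j) (hQ : Qᵀ = Q) (hR : Rᵀ = R) (hRu : IsUnit R)
    (hPnext : Pnextᵀ = Pnext) (hT : IsUnit (R + Bᵀ * (d • Pnext) * B))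
    (hP : P = Aᵀ * (1 + d • (Pnext * B * R⁻¹ * Bᵀ))⁻¹ * Pnext * A + Q)
    (hΔ : Δ = Aᵀ * (1 + d • (Pnext * B * R⁻¹ * Bᵀ))⁻¹ * Δnext - Q) :
    ∃ c, ∀ z u,
      trackingStageCost Q R a x z u
        + trackingValue d Pnext Δnext (∑ j, a j • x j) (A *ᵥ z + B *ᵥ u)
      = (u - trackingFeedback d A B R Pnext Δnext a x z) ⬝ᵥ
          ((R + Bᵀ * (d • Pnext) * B) *ᵥ (u - trackingFeedback d A B R Pnext Δnext a x z))
        + trackingValue d P Δ (∑ j, a j • x j) z + c := by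
  set s := ∑ j, a j • x j
  set T := R + Bᵀ * (d • Pnext) * B
  set W := 1 - d • Pnext * B * T⁻¹ * Bᵀ
  have hW : (1 + d • (Pnext * B * R⁻¹ * Bᵀ))⁻¹ = W := by
    rw [show d • (Pnext * B * R⁻¹ * Bᵀ) = d • Pnext * B * R⁻¹ * Bᵀ by simp only [Matrix.smul_mul],
      inv_one_add_mul_mul_inv_mul hRu hT]
  have hdP : (d • Pnext)ᵀ = d • Pnext := by rw [transpose_smul, hPnext]
  have hconj : ∀ (X : Matrix n n ℝ) z, z ⬝ᵥ ((Aᵀ * X * A) *ᵥ z) = (A *ᵥ z) ⬝ᵥ (X *ᵥ (A *ᵥ z)) :=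
    fun X z => by rw [← mulVec_mulVec, ← mulVec_mulVec, dotProduct_transpose_mulVec']
  refine ⟨∑ j, a j * (x j ⬝ᵥ (Q *ᵥ x j)) - (Bᵀ *ᵥ (Δnext *ᵥ s)) ⬝ᵥ (T⁻¹ *ᵥ (Bᵀ *ᵥ (Δnext *ᵥ s))),
    fun z u => ?_⟩
  have hstep := riccatiStep_completeSquare hdP hR hT u (A *ᵥ z) (Δnext *ᵥ s)
  dsimp only at hstep
  rw [trackingFeedback_eq hd hRu hT, trackingStageCost, sum_mul_dotProduct_sub_mulVec_sub hQ, ← hd]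
  have hnext : trackingValue d Pnext Δnext s (A *ᵥ z + B *ᵥ u)
      = (A *ᵥ z + B *ᵥ u) ⬝ᵥ ((d • Pnext) *ᵥ (A *ᵥ z + B *ᵥ u))
        + 2 * ((A *ᵥ z + B *ᵥ u) ⬝ᵥ (Δnext *ᵥ s)) := by
    rw [trackingValue, smul_mulVec, dotProduct_smul, smul_eq_mul]
  have hcur : trackingValue d P Δ s z
      = (A *ᵥ z) ⬝ᵥ ((W * d • Pnext) *ᵥ (A *ᵥ z)) + 2 * ((A *ᵥ z) ⬝ᵥ (W *ᵥ (Δnext *ᵥ s)))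
        + trackingValue d Q (-Q) s z := by
    rw [hP, hΔ, hW, trackingValue, trackingValue, add_mulVec, sub_mulVec, dotProduct_add,
      dotProduct_sub, Matrix.mul_assoc Aᵀ W Pnext, hconj, Matrix.mul_smul, smul_mulVec,
      dotProduct_smul, smul_eq_mul, ← mulVec_mulVec s (Aᵀ * W), ← mulVec_mulVec _ Aᵀ,
      dotProduct_transpose_mulVec', neg_mulVec, dotProduct_neg]
    ring
  rw [hnext, hcur]
  linarith [hstep]

theorem riccati_posDef {N : ℕ} {Q QN : Matrix n n ℝ} {P : ℕ → Matrix n n ℝ} (hQ : Q.PosDef)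
    (hQN : QN.PosDef) (hR : R.PosDef) (hd : 0 ≤ d) (hPN : P N = QN)
    (hPrec : ∀ k < N, P k = Aᵀ * (1 + d • (P (k + 1) * B * R⁻¹ * Bᵀ))⁻¹ * P (k + 1) * A + Q)
    {k : ℕ} (hk : k ≤ N) : (P k).PosDef :=
  Nat.decreasingInduction (motive := fun k _ => (P k).PosDef)
    (fun k hk ih => hPrec k hk ▸ ih.riccatiStep hQ hR hd A B) (hPN ▸ hQN) hk

end Tracking

theorem extCtrl_coe {m N : ℕ} (U : Fin N → Fin m → ℝ) (k : Fin N) : extCtrl U k = U k :=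
  dif_pos k.isLt

theorem rhcCost_eq {n m M N : ℕ} (A : Matrix (Fin n) (Fin n) ℝ) (B : Matrix (Fin n) (Fin m) ℝ)
    (Q QN : Matrix (Fin n) (Fin n) ℝ) (R : Matrix (Fin m) (Fin m) ℝ) (a : Fin M → ℝ)
    (x : Fin M → Fin n → ℝ) (x0 : Fin n → ℝ) (U : Fin N → Fin m → ℝ) :
    rhcCost A B Q QN R a x x0 U
      = ∑ k ∈ range N, trackingStageCost Q R a x (stateTraj A B x0 (extCtrl U) k) (extCtrl U k)
        + ∑ j, a j * ((stateTraj A B x0 (extCtrl U) N - x j) ⬝ᵥ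
            (QN *ᵥ (stateTraj A B x0 (extCtrl U) N - x j))) := by
  rw [rhcCost, ← Fin.sum_univ_eq_sum_range]
  simp only [trackingStageCost, extCtrl_coe]

theorem stmt1_general (n m M N : ℕ)
    (A : Matrix (Fin n) (Fin n) ℝ) (B : Matrix (Fin n) (Fin m) ℝ)
    (Q QN : Matrix (Fin n) (Fin n) ℝ) (R : Matrix (Fin m) (Fin m) ℝ)
    (hQ : Q.PosDef) (hQN : QN.PosDef) (hR : R.PosDef)
    (a : Fin M → ℝ)
    (d : ℝ) (hd : d = ∑ j, a j) (hd1 : 1 ≤ d)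
    (x : Fin M → Fin n → ℝ) (x0 : Fin n → ℝ)
    (P Δ : ℕ → Matrix (Fin n) (Fin n) ℝ)
    (hPN : P N = QN)
    (hPrec : ∀ k < N,
      P k = Aᵀ * (1 + d • (P (k + 1) * B * R⁻¹ * Bᵀ))⁻¹ * P (k + 1) * A + Q)
    (hΔN : Δ N = -QN)
    (hΔrec : ∀ k < N,
      Δ k = Aᵀ * (1 + d • (P (k + 1) * B * R⁻¹ * Bᵀ))⁻¹ * Δ (k + 1) - Q) :
    ∃ Ustar : Fin N → Fin m → ℝ,
      (∀ V : Fin N → Fin m → ℝ, V ≠ Ustar →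
        rhcCost A B Q QN R a x x0 Ustar < rhcCost A B Q QN R a x x0 V) ∧
      ∀ k : Fin N,
        Ustar k = ∑ j, a j •
          ((-(R⁻¹ * Bᵀ * (1 + d • (P ((k : ℕ) + 1) * B * R⁻¹ * Bᵀ))⁻¹ *
              P ((k : ℕ) + 1) * A)) *ᵥ stateTraj A B x0 (extCtrl Ustar) k +
            (-(R⁻¹ * Bᵀ * (1 + d • (P ((k : ℕ) + 1) * B * R⁻¹ * Bᵀ))⁻¹ *
              Δ ((k : ℕ) + 1))) *ᵥ x j) := by
  have hsymm {k : ℕ} {X : Matrix (Fin k) (Fin k) ℝ} (h : X.PosDef) : Xᵀ = X :=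
    (isHermitian_iff_isSymm.mp h.isHermitian).eq
  have hd0 : 0 ≤ d := by linarith
  have hP : ∀ k ≤ N, (P k).PosDef := fun k hk => riccati_posDef hQ hQN hR hd0 hPN hPrec hk
  set T := fun k => R + Bᵀ * (d • P (k + 1)) * B
  have hT : ∀ k < N, (T k).PosDef := fun k hk => by
    simpa [T] using hR.add_posSemidef
      (((hP (k + 1) hk).posSemidef.smul hd0).conjTranspose_mul_mul_same B)
  set φ := fun k => trackingFeedback d A B R (P (k + 1)) (Δ (k + 1)) a x
  set V := fun k => trackingValue d (P k) (Δ k) (∑ j, a j • x j)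
  have hstage : ∀ k < N, ∃ c, ∀ z u, trackingStageCost Q R a x z u + V (k + 1) (A *ᵥ z + B *ᵥ u)
      = (u - φ k z) ⬝ᵥ (T k *ᵥ (u - φ k z)) + V k z + c := fun k hk =>
    trackingStageCost_add_trackingValue x hd (hsymm hQ) (hsymm hR) hR.isUnit
      (hsymm (hP (k + 1) hk)) (hT k hk).isUnit (hPrec k hk) (hΔrec k hk)
  have hterminal (z : Fin n → ℝ) : ∑ j, a j * ((z - x j) ⬝ᵥ (QN *ᵥ (z - x j)))
      = V N z + ∑ j, a j * (x j ⬝ᵥ (QN *ᵥ x j)) := by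
    simp only [V, hPN, hΔN, sum_mul_dotProduct_sub_mulVec_sub (hsymm hQN), ← hd]
  let Ustar : Fin N → Fin m → ℝ := fun k => φ k (closedLoopTraj A B x0 φ k)
  have hUstar : ∀ k < N, extCtrl Ustar k = φ k (closedLoopTraj A B x0 φ k) :=
    fun k hk => dif_pos hk
  refine ⟨Ustar, fun U hU => ?_, fun k => ?_⟩
  · simp only [rhcCost_eq, hterminal, ← add_assoc, add_lt_add_iff_right]
    refine cost_lt_of_ne_closedLoop (f := fun _ => trackingStageCost Q R a x) hstage hT hUstar ?_
    by_contra! h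
    exact hU (funext fun k => by simpa only [extCtrl_coe] using h k k.isLt)
  · show Ustar k = φ k (stateTraj A B x0 (extCtrl Ustar) k)
    rw [stateTraj_eq_closedLoopTraj hUstar k.isLt.le]

theorem stmt1 (n m M N : ℕ) (hN : 1 ≤ N)
    (A : Matrix (Fin n) (Fin n) ℝ) (B : Matrix (Fin n) (Fin m) ℝ)
    (Q QN : Matrix (Fin n) (Fin n) ℝ) (R : Matrix (Fin m) (Fin m) ℝ)
    (hQ : Q.PosDef) (hQN : QN.PosDef) (hR : R.PosDef)
    (a : Fin M → ℝ) (ha : ∀ j, a j = 0 ∨ a j = 1)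
    (d : ℝ) (hd : d = ∑ j, a j) (hd1 : 1 ≤ d)
    (x : Fin M → Fin n → ℝ) (x0 : Fin n → ℝ)
    (P Δ : ℕ → Matrix (Fin n) (Fin n) ℝ)
    (hPN : P N = QN)
    (hPrec : ∀ k < N,
      P k = Aᵀ * (1 + d • (P (k + 1) * B * R⁻¹ * Bᵀ))⁻¹ * P (k + 1) * A + Q)
    (hΔN : Δ N = -QN)
    (hΔrec : ∀ k < N,
      Δ k = Aᵀ * (1 + d • (P (k + 1) * B * R⁻¹ * Bᵀ))⁻¹ * Δ (k + 1) - Q) :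
    ∃ Ustar : Fin N → Fin m → ℝ,
      (∀ V : Fin N → Fin m → ℝ, V ≠ Ustar →
        rhcCost A B Q QN R a x x0 Ustar < rhcCost A B Q QN R a x x0 V) ∧
      ∀ k : Fin N,
        Ustar k = ∑ j, a j •
          ((-(R⁻¹ * Bᵀ * (1 + d • (P ((k : ℕ) + 1) * B * R⁻¹ * Bᵀ))⁻¹ *
              P ((k : ℕ) + 1) * A)) *ᵥ stateTraj A B x0 (extCtrl Ustar) k +
            (-(R⁻¹ * Bᵀ * (1 + d • (P ((k : ℕ) + 1) * B * R⁻¹ * Bᵀ))⁻¹ *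
              Δ ((k : ℕ) + 1))) *ᵥ x j) :=
  stmt1_general n m M N A B Q QN R hQ hQN hR a d hd hd1 x x0 P Δ hPN hPrec hΔN hΔrec
end

section
/- Fix weights a_1,…,a_M ∈ {0,1} with d = Σ_{j=1}^M a_j ≥ 1, target vectors x_1,…,x_M ∈ ℝⁿ, and an initial state x₀ ∈ ℝⁿ. Suppose sequences x̂*(0),…,x̂*(N) ∈ ℝⁿ, û*(0),…,û*(N−1) ∈ ℝᵐ and multipliers λ(1),…,λ(N) ∈ ℝⁿ satisfy the KKT conditions: x̂*(0) = x₀; x̂*(n+1) = A x̂*(n) + B û*(n) for n = 0,…,N−1; R û*(n) + Bᵀλ(n+1) = 0 for n = 0,…,N−1; λ(n) = Σ_{j=1}^M a_j Q (x̂*(n) − x_j) + Aᵀλ(n+1) for n = 1,…,N−1; and λ(N) = Σ_{j=1}^M a_j Q_N (x̂*(N) − x_j). Then λ(n) = Σ_{j=1}^M a_j [P(n) x̂*(n) + Δ(n) x_j] for all n = 1,…,N, where P, Δ are the backward matrix recursions P(n) = Aᵀ(I + d·P(n+1)BR⁻¹Bᵀ)⁻¹P(n+1)A + Q with P(N) =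 Q_N, and Δ(n) = Aᵀ(I + d·P(n+1)BR⁻¹Bᵀ)⁻¹Δ(n+1) − Q with Δ(N) = −Q_N. -/
/-!
Write `x̄ = ∑ⱼ aⱼ xⱼ`, so that the claim reads `λ(k) = d P(k) x̂*(k) + Δ(k) x̄`. This is proved by
backward induction on `k`. Stationarity gives `u = -R⁻¹Bᵀλ(k+1)`, so the induction hypothesis and
the dynamics give `(I + d P(k+1) B R⁻¹ Bᵀ) λ(k+1) = d P(k+1) A x̂*(k) + Δ(k+1) x̄`; solving for
`λ(k+1)` and substituting into the adjoint equation yields the recursions for `P(k)` and `Δ(k)`.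
The matrix `I + P G` (with `G = d B R⁻¹ Bᵀ ⪰ 0`) is invertible because it factors as `P (P⁻¹ + G)`
as long as `P ≻ 0`, and the same factorization shows that the Riccati recursion keeps `P(k) ≻ 0`.
-/

open Matrix

namespace Matrix

theorem one_add_mul_eq_mul_inv_add {n α : Type*} [Fintype n] [DecidableEq n] [CommRing α]
    {P : Matrix n n α} (hP : IsUnit P.det) (G : Matrix n n α) :
    1 + P * G = P * (P⁻¹ + G) := by
  rw [Matrix.mul_add, mul_nonsing_inv _ hP]

theorem inv_one_add_mul_mul_self {n α : Type*} [Fintype n] [DecidableEq n] [CommRing α]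
    {P : Matrix n n α} (hP : IsUnit P.det) (G : Matrix n n α) :
    (1 + P * G)⁻¹ * P = (P⁻¹ + G)⁻¹ := by
  rw [one_add_mul_eq_mul_inv_add hP, mul_inv_rev, Matrix.mul_assoc, nonsing_inv_mul _ hP,
    Matrix.mul_one]

section PosDef

variable {n : Type*} [Fintype n] [DecidableEq n] {𝕜 : Type*} [Field 𝕜] [PartialOrder 𝕜]
  [StarRing 𝕜] [AddLeftMono 𝕜] {P G : Matrix n n 𝕜}

theorem PosDef.isUnit_det_one_add_mul (hP : P.PosDef) (hG : G.PosSemidef) :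
    IsUnit (1 + P * G).det := by
  rw [one_add_mul_eq_mul_inv_add ((isUnit_iff_isUnit_det P).mp hP.isUnit)]
  exact (isUnit_iff_isUnit_det _).mp (hP.isUnit.mul (hP.inv.add_posSemidef hG).isUnit)

theorem PosDef.riccati_update {m : Type*} [Fintype m] {Q : Matrix m m 𝕜}
    (hP : P.PosDef) (hG : G.PosSemidef) (hQ : Q.PosDef) (A : Matrix n m 𝕜) :
    (Aᴴ * (1 + P * G)⁻¹ * P * A + Q).PosDef := by
  rw [Matrix.mul_assoc Aᴴ, inv_one_add_mul_mul_self ((isUnit_iff_isUnit_det P).mp hP.isUnit)]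
  exact PosDef.posSemidef_add
    ((hP.inv.add_posSemidef hG).inv.posSemidef.conjTranspose_mul_mul_same A) hQ

end PosDef

end Matrix

section Costate

variable {α : Type*} [CommRing α] {n m : Type*} [Fintype n] [Fintype m]

theorem sum_smul_mulVec_add_mulVec {ι : Type*} [Fintype ι] (a : ι → α) (P D : Matrix n n α)
    (y : n → α) (x : ι → n → α) :
    ∑ j, a j • (P *ᵥ y + D *ᵥ x j) = (∑ j, a j) • (P *ᵥ y) + D *ᵥ ∑ j, a j • x j := by
  simp only [smul_add, Finset.sum_add_distrib, Finset.sum_smul, mulVec_sum, mulVec_smul]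

theorem sum_smul_mulVec_sub {ι : Type*} [Fintype ι] (a : ι → α) (Q : Matrix n n α)
    (y : n → α) (x : ι → n → α) :
    ∑ j, a j • (Q *ᵥ (y - x j)) = (∑ j, a j) • (Q *ᵥ y) - Q *ᵥ ∑ j, a j • x j := by
  simp only [mulVec_sub, smul_sub, Finset.sum_sub_distrib, Finset.sum_smul, mulVec_sum,
    mulVec_smul]

variable [DecidableEq n] [DecidableEq m]

theorem costate_step {A Q P' D' : Matrix n n α} {B : Matrix n m α} {R : Matrix m m α} {d : α}
    {x x' xbar l l' : n → α} {u : m → α}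
    (hR : IsUnit R.det) (hS : IsUnit (1 + d • (P' * B * R⁻¹ * Bᵀ)).det)
    (hdyn : x' = A *ᵥ x + B *ᵥ u) (hstat : R *ᵥ u + Bᵀ *ᵥ l' = 0)
    (hl' : l' = d • (P' *ᵥ x') + D' *ᵥ xbar)
    (hl : l = d • (Q *ᵥ x) - Q *ᵥ xbar + Aᵀ *ᵥ l') :
    l = d • ((Aᵀ * (1 + d • (P' * B * R⁻¹ * Bᵀ))⁻¹ * P' * A + Q) *ᵥ x)
      + (Aᵀ * (1 + d • (P' * B * R⁻¹ * Bᵀ))⁻¹ * D' - Q) *ᵥ xbar := by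
  set S := 1 + d • (P' * B * R⁻¹ * Bᵀ)
  have hu : u = -((R⁻¹ * Bᵀ) *ᵥ l') := by
    rw [← mulVec_mulVec, ← mulVec_neg, ← eq_neg_of_add_eq_zero_left hstat, mulVec_mulVec,
      nonsing_inv_mul _ hR, one_mulVec]
  have hx' : x' = A *ᵥ x - (B * R⁻¹ * Bᵀ) *ᵥ l' := by
    rw [hdyn, hu, mulVec_neg, mulVec_mulVec, ← Matrix.mul_assoc, sub_eq_add_neg]
  have hSl : S *ᵥ l' = d • ((P' * A) *ᵥ x) + D' *ᵥ xbar := by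
    calc S *ᵥ l' = l' + d • ((P' * B * R⁻¹ * Bᵀ) *ᵥ l') := by
          rw [add_mulVec, one_mulVec, smul_mulVec]
      _ = d • ((P' * A) *ᵥ x) + D' *ᵥ xbar := by
          nth_rewrite 1 [hl']
          rw [hx', mulVec_sub, smul_sub, mulVec_mulVec, mulVec_mulVec]
          simp only [Matrix.mul_assoc]
          abel
  have hl'_eq : l' = S⁻¹ *ᵥ (d • ((P' * A) *ᵥ x) + D' *ᵥ xbar) := by
    rw [← hSl, mulVec_mulVec, nonsing_inv_mul _ hS, one_mulVec]
  rw [hl, hl'_eq]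
  simp only [mulVec_add, add_mulVec, sub_mulVec, mulVec_smul, smul_add, mulVec_mulVec,
    Matrix.mul_assoc]
  abel

end Costate

theorem stmt2_general (n m M N : ℕ)
    (A : Matrix (Fin n) (Fin n) ℝ) (B : Matrix (Fin n) (Fin m) ℝ)
    (Q QN : Matrix (Fin n) (Fin n) ℝ) (R : Matrix (Fin m) (Fin m) ℝ)
    (hQ : Q.PosDef) (hQN : QN.PosDef) (hR : R.PosDef)
    (a : Fin M → ℝ)
    (d : ℝ) (hd : d = ∑ j, a j) (hd1 : 1 ≤ d)
    (x : Fin M → Fin n → ℝ)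
    (xhat : ℕ → Fin n → ℝ) (uhat : ℕ → Fin m → ℝ) (lam : ℕ → Fin n → ℝ)
    -- KKT conditions
    (hdyn : ∀ k < N, xhat (k + 1) = A *ᵥ xhat k + B *ᵥ uhat k)
    (hstat : ∀ k < N, R *ᵥ uhat k + Bᵀ *ᵥ lam (k + 1) = 0)
    (hadj : ∀ k, 1 ≤ k → k < N →
      lam k = (∑ j, a j • (Q *ᵥ (xhat k - x j))) + Aᵀ *ᵥ lam (k + 1))
    (hterm : lam N = ∑ j, a j • (QN *ᵥ (xhat N - x j)))
    -- backward matrix recursions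
    (P Δ : ℕ → Matrix (Fin n) (Fin n) ℝ)
    (hPN : P N = QN)
    (hPrec : ∀ k < N,
      P k = Aᵀ * (1 + d • (P (k + 1) * B * R⁻¹ * Bᵀ))⁻¹ * P (k + 1) * A + Q)
    (hΔN : Δ N = -QN)
    (hΔrec : ∀ k < N,
      Δ k = Aᵀ * (1 + d • (P (k + 1) * B * R⁻¹ * Bᵀ))⁻¹ * Δ (k + 1) - Q) :
    ∀ k, 1 ≤ k → k ≤ N →
      lam k = ∑ j, a j • (P k *ᵥ xhat k + Δ k *ᵥ x j) := by
  set G := d • (B * R⁻¹ * Bᵀ)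
  have hG : G.PosSemidef := by
    simpa [conjTranspose_eq_transpose_of_trivial] using
      (hR.inv.posSemidef.mul_mul_conjTranspose_same B).smul (by linarith : (0 : ℝ) ≤ d)
  have hgain : ∀ k, 1 + d • (P (k + 1) * B * R⁻¹ * Bᵀ) = 1 + P (k + 1) * G := by
    intro k
    simp only [G, Matrix.mul_smul, Matrix.mul_assoc]
  have hPpos : ∀ k ≤ N, (P k).PosDef := fun k hk =>
    Nat.decreasingInduction (motive := fun k _ => (P k).PosDef)
      (fun k hk ih => by
        have h := ih.riccati_update hG hQ A
        rwa [conjTranspose_eq_transpose_of_trivial, ← hgain, ← hPrec k hk] at h)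
      (hPN ▸ hQN) hk
  set xbar := ∑ j, a j • x j
  suffices h : ∀ k ≤ N, 1 ≤ k → lam k = d • (P k *ᵥ xhat k) + Δ k *ᵥ xbar by
    intro k hk1 hkN
    rw [h k hkN hk1, sum_smul_mulVec_add_mulVec, hd]
  refine fun k hk => Nat.decreasingInduction
    (motive := fun k _ => 1 ≤ k → lam k = d • (P k *ᵥ xhat k) + Δ k *ᵥ xbar) ?_ ?_ hk
  · intro k hk ih hk1
    rw [hPrec k hk, hΔrec k hk]
    refine costate_step (isUnit_iff_isUnit_det R |>.mp hR.isUnit) ?_ (hdyn k hk) (hstat k hk)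
      (ih (by omega)) ?_
    · rw [hgain]
      exact (hPpos (k + 1) hk).isUnit_det_one_add_mul hG
    · rw [hadj k hk1 hk, sum_smul_mulVec_sub, hd]
  · intro _
    rw [hterm, sum_smul_mulVec_sub, hPN, hΔN, ← hd, neg_mulVec, sub_eq_add_neg]

theorem stmt2 (n m M N : ℕ) (hN : 1 ≤ N)
    (A : Matrix (Fin n) (Fin n) ℝ) (B : Matrix (Fin n) (Fin m) ℝ)
    (Q QN : Matrix (Fin n) (Fin n) ℝ) (R : Matrix (Fin m) (Fin m) ℝ)
    (hQ : Q.PosDef) (hQN : QN.PosDef) (hR : R.PosDef)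
    (a : Fin M → ℝ) (ha : ∀ j, a j = 0 ∨ a j = 1)
    (d : ℝ) (hd : d = ∑ j, a j) (hd1 : 1 ≤ d)
    (x : Fin M → Fin n → ℝ) (x0 : Fin n → ℝ)
    (xhat : ℕ → Fin n → ℝ) (uhat : ℕ → Fin m → ℝ) (lam : ℕ → Fin n → ℝ)
    -- KKT conditions
    (hx0 : xhat 0 = x0)
    (hdyn : ∀ k < N, xhat (k + 1) = A *ᵥ xhat k + B *ᵥ uhat k)
    (hstat : ∀ k < N, R *ᵥ uhat k + Bᵀ *ᵥ lam (k + 1) = 0)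
    (hadj : ∀ k, 1 ≤ k → k < N →
      lam k = (∑ j, a j • (Q *ᵥ (xhat k - x j))) + Aᵀ *ᵥ lam (k + 1))
    (hterm : lam N = ∑ j, a j • (QN *ᵥ (xhat N - x j)))
    -- backward matrix recursions
    (P Δ : ℕ → Matrix (Fin n) (Fin n) ℝ)
    (hPN : P N = QN)
    (hPrec : ∀ k < N,
      P k = Aᵀ * (1 + d • (P (k + 1) * B * R⁻¹ * Bᵀ))⁻¹ * P (k + 1) * A + Q)
    (hΔN : Δ N = -QN)
    (hΔrec : ∀ k < N,
      Δ k = Aᵀ * (1 + d • (P (k + 1) * B * R⁻¹ * Bᵀ))⁻¹ * Δ (k + 1) - Q) :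
    ∀ k, 1 ≤ k → k ≤ N →
      lam k = ∑ j, a j • (P k *ᵥ xhat k + Δ k *ᵥ x j) :=
  stmt2_general n m M N A B Q QN R hQ hQN hR a d hd hd1 x xhat uhat lam hdyn hstat hadj hterm P Δ
    hPN hPrec hΔN hΔrec
end

section
/- Assume every vertex of the digraph has in-degree d_i ≥ 1, and let Γ = diag(1/d_1,…,1/d_M)·ℒ. If the digraph contains a spanning tree, then the row sums of the normalized adjacency matrix diag(1/d_1,…,1/d_M)·𝒜 all equal 1, Γ·𝟏 = 0, and 0 is a simple eigenvalue of Γ (algebraic multiplicity exactly 1 in the characteristic polynomial of Γ). -/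
open Matrix Polynomial

/-! With `P = diag(1/d) 𝒜`, which is row-stochastic, `Γ = 1 - P`. By the maximum principle, a
maximum of a fixed vector `x = P x` propagates from a vertex to every vertex it receives from, so
back along the spanning tree to the root; applied to `x` and `-x`, `x` is constant and
`ker Γ = span 𝟏`. At a minimum of `y` we get `(Γ y)_i ≤ 0`, so `𝟏 ∉ range Γ`. Hence
`ker Γ ⊓ range Γ = ⊥`, the generalised `0`-eigenspace of `Γ` is `ker Γ`, and `0` is a root of
multiplicity `dim ker Γ = 1` of the characteristic polynomial. -/

namespace Module.End

variable {R M : Type*} [CommRing R] [AddCommGroup M] [Module R M]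

theorem ker_pow_le_ker_of_disjoint {f : End R M}
    (hf : Disjoint (LinearMap.ker f) (LinearMap.range f)) :
    ∀ k : ℕ, LinearMap.ker (f ^ k) ≤ LinearMap.ker f
  | 0 => fun m hm => by simp_all
  | k + 1 => fun m hm => by
    have hfm : f m ∈ LinearMap.ker f :=
      ker_pow_le_ker_of_disjoint hf k (by simpa [pow_succ] using hm)
    exact hf.le_bot ⟨hfm, m, rfl⟩

theorem maxGenEigenspace_zero_eq_ker_of_disjoint {f : End R M}
    (hf : Disjoint (LinearMap.ker f) (LinearMap.range f)) :
    f.maxGenEigenspace 0 = LinearMap.ker f := by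
  ext m
  simp only [mem_maxGenEigenspace, zero_smul, sub_zero, LinearMap.mem_ker]
  exact ⟨fun ⟨k, hk⟩ => ker_pow_le_ker_of_disjoint hf k hk, fun hm => ⟨1, by simpa using hm⟩⟩

theorem rootMultiplicity_zero_charpoly_of_disjoint {K V : Type*} [Field K] [AddCommGroup V]
    [Module K V] [FiniteDimensional K V] {f : End K V}
    (hf : Disjoint (LinearMap.ker f) (LinearMap.range f)) :
    f.charpoly.rootMultiplicity 0 = Module.finrank K (LinearMap.ker f) := by
  rw [rootMultiplicity_eq_natTrailingDegree', ← f.finrank_maxGenEigenspace_zero_eq,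
    maxGenEigenspace_zero_eq_ker_of_disjoint hf]

end Module.End

namespace Matrix

variable {R ι : Type*} [Field R] [Fintype ι] [DecidableEq ι]

theorem diagonal_inv_mul_diagonal_sub {d : ι → R} (hd : ∀ i, d i ≠ 0) (A : Matrix ι ι R) :
    diagonal (fun i => (d i)⁻¹) * (diagonal d - A) = 1 - diagonal (fun i => (d i)⁻¹) * A := by
  rw [mul_sub, diagonal_mul_diagonal, ← diagonal_one]
  simp only [inv_mul_cancel₀ (hd _)]

variable [LinearOrder R] [IsStrictOrderedRing R] {P : Matrix ι ι R}

theorem diagonal_inv_mul_mem_rowStochastic {A : Matrix ι ι R} (hA : ∀ i j, 0 ≤ A i j)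
    (hrow : ∀ i, ∑ j, A i j ≠ 0) :
    diagonal (fun i => (∑ j, A i j)⁻¹) * A ∈ rowStochastic R ι := by
  refine mem_rowStochastic_iff_sum.mpr ⟨fun i j => ?_, fun i => ?_⟩
  · rw [diagonal_mul]
    exact mul_nonneg (inv_nonneg.mpr (Finset.sum_nonneg fun j _ => hA i j)) (hA i j)
  · simp only [diagonal_mul, ← Finset.mul_sum, inv_mul_cancel₀ (hrow i)]

theorem apply_eq_of_isMax_of_mulVec_apply_eq (hP : P ∈ rowStochastic R ι) {x : ι → R} {i : ι}
    (hx : (P *ᵥ x) i = x i) (hmax : ∀ k, x k ≤ x i) {j : ι} (hij : 0 < P i j) : x j = x i := by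
  have hle : ∀ k ∈ Finset.univ, P i k * x k ≤ P i k * x i := fun k _ =>
    mul_le_mul_of_nonneg_left (hmax k) (nonneg_of_mem_rowStochastic hP)
  have hsum : ∑ k, P i k * x k = ∑ k, P i k * x i := by
    rw [← Finset.sum_mul, sum_row_of_mem_rowStochastic hP, one_mul]
    exact hx
  exact mul_left_cancel₀ hij.ne' <|
    (Finset.sum_eq_sum_iff_of_le hle).mp hsum j (Finset.mem_univ j)

theorem apply_eq_of_isMax_of_reflTransGen (hP : P ∈ rowStochastic R ι) {x : ι → R}
    (hx : P *ᵥ x = x) {m : ι} (hmax : ∀ k, x k ≤ x m) {a : ι}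
    (ham : Relation.ReflTransGen (fun u v => 0 < P v u) a m) : x a = x m := by
  induction ham using Relation.ReflTransGen.head_induction_on with
  | refl => rfl
  | head hab _ ih =>
    rw [← ih]
    exact apply_eq_of_isMax_of_mulVec_apply_eq hP (congrFun hx _) (ih ▸ hmax) hab

theorem le_apply_root_of_mulVec_eq_self (hP : P ∈ rowStochastic R ι) {r : ι}
    (hr : ∀ i, Relation.ReflTransGen (fun u v => 0 < P v u) r i) {x : ι → R}
    (hx : P *ᵥ x = x) (k : ι) : x k ≤ x r := by
  have : Nonempty ι := ⟨r⟩
  obtain ⟨m, hm⟩ := Finite.exists_max x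
  exact apply_eq_of_isMax_of_reflTransGen hP hx hm (hr m) ▸ hm k

theorem apply_eq_root_of_mulVec_eq_self (hP : P ∈ rowStochastic R ι) {r : ι}
    (hr : ∀ i, Relation.ReflTransGen (fun u v => 0 < P v u) r i) {x : ι → R}
    (hx : P *ᵥ x = x) (k : ι) : x k = x r :=
  le_antisymm (le_apply_root_of_mulVec_eq_self hP hr hx k) <| neg_le_neg_iff.mp <|
    le_apply_root_of_mulVec_eq_self hP hr (x := -x) (by rw [mulVec_neg, hx]) k

theorem exists_le_mulVec_apply [Nonempty ι] (hP : P ∈ rowStochastic R ι) (y : ι → R) :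
    ∃ i, y i ≤ (P *ᵥ y) i := by
  obtain ⟨i, hi⟩ := Finite.exists_min y
  refine ⟨i, ?_⟩
  calc y i = ∑ j, P i j * y i := by
        rw [← Finset.sum_mul, sum_row_of_mem_rowStochastic hP, one_mul]
    _ ≤ ∑ j, P i j * y j := Finset.sum_le_sum fun j _ =>
      mul_le_mul_of_nonneg_left (hi j) (nonneg_of_mem_rowStochastic hP)

theorem ker_toLin'_one_sub_eq_span (hP : P ∈ rowStochastic R ι) {r : ι}
    (hr : ∀ i, Relation.ReflTransGen (fun u v => 0 < P v u) r i) :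
    LinearMap.ker (toLin' (1 - P)) = Submodule.span R {1} := by
  refine le_antisymm (fun x hx => ?_) ?_
  · have hx : P *ᵥ x = x := by
      simpa [sub_mulVec, sub_eq_zero, eq_comm] using hx
    refine Submodule.mem_span_singleton.mpr ⟨x r, funext fun k => ?_⟩
    simp [apply_eq_root_of_mulVec_eq_self hP hr hx k]
  · simp [Submodule.span_le, one_vecMul_of_mem_rowStochastic hP]

theorem one_notMem_range_toLin'_one_sub [Nonempty ι] (hP : P ∈ rowStochastic R ι) :
    1 ∉ LinearMap.range (toLin' (1 - P)) := by
  rintro ⟨y, hy⟩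
  obtain ⟨i, hi⟩ := exists_le_mulVec_apply hP y
  have hyi : y i - (P *ᵥ y) i = 1 := by simpa [sub_mulVec] using congrFun hy i
  linarith

theorem rootMultiplicity_zero_charpoly_one_sub (hP : P ∈ rowStochastic R ι) {r : ι}
    (hr : ∀ i, Relation.ReflTransGen (fun u v => 0 < P v u) r i) :
    (1 - P).charpoly.rootMultiplicity 0 = 1 := by
  have : Nonempty ι := ⟨r⟩
  have hker := ker_toLin'_one_sub_eq_span hP hr
  have hdisj : Disjoint (LinearMap.ker (toLin' (1 - P))) (LinearMap.range (toLin' (1 - P))) :=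
    hker ▸ (Submodule.disjoint_span_singleton_of_notMem (one_notMem_range_toLin'_one_sub hP)).symm
  rw [← charpoly_toLin', Module.End.rootMultiplicity_zero_charpoly_of_disjoint hdisj, hker,
    finrank_span_singleton one_ne_zero]

end Matrix

theorem stmt3_general (M : ℕ)
    (Adj : Matrix (Fin M) (Fin M) ℝ)
    (hA01 : ∀ i j, Adj i j = 0 ∨ Adj i j = 1)
    (d : Fin M → ℝ) (hd : ∀ i, d i = ∑ j, Adj i j) (hdeg : ∀ i, 1 ≤ d i)
    (Γ : Matrix (Fin M) (Fin M) ℝ)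
    (hΓ : Γ = Matrix.diagonal (fun i => (d i)⁻¹) * (Matrix.diagonal d - Adj))
    (hspan : ContainsSpanningTree Adj) :
    (∀ i, ∑ j, (Matrix.diagonal (fun i => (d i)⁻¹) * Adj) i j = 1) ∧
      Γ *ᵥ (fun _ => (1 : ℝ)) = 0 ∧
      Polynomial.rootMultiplicity 0 Γ.charpoly = 1 := by
  have hdpos : ∀ i, 0 < d i := fun i => zero_lt_one.trans_le (hdeg i)
  have hAnonneg : ∀ i j, 0 ≤ Adj i j := fun i j => by rcases hA01 i j with h | h <;> simp [h]
  have hP : diagonal (fun i => (d i)⁻¹) * Adj ∈ rowStochastic ℝ (Fin M) := by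
    simpa only [← hd] using
      diagonal_inv_mul_mem_rowStochastic hAnonneg fun i => hd i ▸ (hdpos i).ne'
  have hΓP : Γ = 1 - diagonal (fun i => (d i)⁻¹) * Adj :=
    hΓ.trans (diagonal_inv_mul_diagonal_sub (fun i => (hdpos i).ne') Adj)
  obtain ⟨r, hr⟩ := hspan
  refine ⟨sum_row_of_mem_rowStochastic hP, ?_, ?_⟩
  · rw [hΓP, sub_mulVec, one_mulVec]
    exact sub_eq_zero.mpr (one_vecMul_of_mem_rowStochastic hP).symm
  · rw [hΓP]
    refine rootMultiplicity_zero_charpoly_one_sub hP fun i =>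
      Relation.ReflTransGen.mono (fun u v huv => ?_) _ _ (hr i)
    rw [diagonal_mul, huv, mul_one]
    exact inv_pos.mpr (hdpos v)

theorem stmt3 (M : ℕ) (hM : 0 < M)
    (Adj : Matrix (Fin M) (Fin M) ℝ)
    (hA01 : ∀ i j, Adj i j = 0 ∨ Adj i j = 1)
    (hdiag : ∀ i, Adj i i = 0)
    (d : Fin M → ℝ) (hd : ∀ i, d i = ∑ j, Adj i j) (hdeg : ∀ i, 1 ≤ d i)
    (Γ : Matrix (Fin M) (Fin M) ℝ)
    (hΓ : Γ = Matrix.diagonal (fun i => (d i)⁻¹) * (Matrix.diagonal d - Adj))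
    (hspan : ContainsSpanningTree Adj) :
    (∀ i, ∑ j, (Matrix.diagonal (fun i => (d i)⁻¹) * Adj) i j = 1) ∧
      Γ *ᵥ (fun _ => (1 : ℝ)) = 0 ∧
      Polynomial.rootMultiplicity 0 Γ.charpoly = 1 :=
  stmt3_general M Adj hA01 d hd hdeg Γ hΓ hspan
end

section
/- Let X, Y ∈ ℂ^{n×n} and W ∈ ℂ^{p×p}. Then z ∈ ℂ is an eigenvalue of the np×np matrix I_p ⊗ X + W ⊗ Y if and only if there exists an eigenvalue μ of W such that z is an eigenvalue of X + μY. -/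
/-!
Write `M = I_p ⊗ X + W ⊗ Y`. Under `vec`, `M` acts on `n × p` matrices as `V ↦ X V + Y V Wᵀ` and
`W ⊗ I_n` as `V ↦ V Wᵀ`; these commute, so over an algebraically closed field an eigenspace of `M`
contains an eigenvector `V` of `V ↦ V Wᵀ`, say `V Wᵀ = μ V`. Then `W Vᵀ = μ Vᵀ` and
`(X + μ Y) V = z V`, and the nonzero columns of `Vᵀ` and `V` are eigenvectors of `W` and `X + μ Y`.
Conversely, if `W c = μ c` and `(X + μ Y) r = z r`, then `r cᵀ` is an eigenvector of
`V ↦ X V + Y V Wᵀ` for `z`.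
-/

open Matrix Kronecker

theorem Module.End.exists_hasEigenvector_of_commute {K V : Type*} [Field K] [IsAlgClosed K]
    [AddCommGroup V] [Module K V] [FiniteDimensional K V] {f g : Module.End K V}
    (hfg : Commute f g) {z : K} (hz : f.HasEigenvalue z) :
    ∃ μ v, f.HasEigenvector z v ∧ g.HasEigenvector μ v := by
  have : Nontrivial (f.eigenspace z) := Submodule.nontrivial_iff_ne_bot.mpr hz
  obtain ⟨μ, hμ⟩ := exists_eigenvalue (g.restrict (mapsTo_genEigenspace_of_comm hfg z 1))
  obtain ⟨⟨v, hv⟩, hvμ⟩ := hμ.exists_hasEigenvector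
  have hv0 : v ≠ 0 := fun h => hvμ.2 (by simpa using h)
  exact ⟨μ, v, ⟨hv, hv0⟩, mem_eigenspace_iff.mpr (congrArg Subtype.val hvμ.apply_eq_smul), hv0⟩

namespace Matrix

section Eigenvalues

variable {K ι : Type*} [Field K] [Fintype ι] [DecidableEq ι]

theorem isRoot_charpoly_iff_hasEigenvalue_toLin' {A : Matrix ι ι K} {z : K} :
    A.charpoly.IsRoot z ↔ Module.End.HasEigenvalue (toLin' A) z := by
  rw [Module.End.hasEigenvalue_iff_isRoot_charpoly, charpoly_toLin']

theorem hasEigenvector_toLin'_iff {A : Matrix ι ι K} {z : K} {v : ι → K} :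
    Module.End.HasEigenvector (toLin' A) z v ↔ A *ᵥ v = z • v ∧ v ≠ 0 := by
  simp [Module.End.hasEigenvector_iff]

theorem isRoot_charpoly_iff_exists_mulVec_eq_smul {A : Matrix ι ι K} {z : K} :
    A.charpoly.IsRoot z ↔ ∃ v ≠ 0, A *ᵥ v = z • v := by
  rw [isRoot_charpoly_iff_hasEigenvalue_toLin']
  constructor
  · intro h
    obtain ⟨v, hv⟩ := h.exists_hasEigenvector
    exact ⟨v, (hasEigenvector_toLin'_iff.mp hv).2, (hasEigenvector_toLin'_iff.mp hv).1⟩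
  · rintro ⟨v, hv0, hv⟩
    exact Module.End.hasEigenvalue_of_hasEigenvector (hasEigenvector_toLin'_iff.mpr ⟨hv, hv0⟩)

theorem isRoot_charpoly_of_mul_eq_smul {κ : Type*} {A : Matrix ι ι K} {V : Matrix ι κ K} {z : K}
    (hV : V ≠ 0) (h : A * V = z • V) : A.charpoly.IsRoot z := by
  obtain ⟨k, hk⟩ : ∃ k, Vᵀ k ≠ 0 := by
    by_contra! h0
    exact hV (transpose_eq_zero.mp (funext h0))
  refine isRoot_charpoly_iff_exists_mulVec_eq_smul.mpr ⟨Vᵀ k, hk, ?_⟩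
  calc A *ᵥ Vᵀ k = (A * V)ᵀ k := by rw [transpose_mul, mul_apply_eq_vecMul, vecMul_transpose]
    _ = z • Vᵀ k := by rw [h, transpose_smul]; rfl

end Eigenvalues

section Kronecker

variable {K ι κ : Type*} [Field K] [Fintype ι] [DecidableEq ι] [Fintype κ]

theorem one_kronecker_add_kronecker_mulVec_vec (X Y : Matrix κ κ K) (W : Matrix ι ι K)
    (V : Matrix κ ι K) :
    ((1 : Matrix ι ι K) ⊗ₖ X + W ⊗ₖ Y) *ᵥ vec V = vec (X * V + Y * V * Wᵀ) := by
  rw [add_mulVec, kronecker_mulVec_vec, kronecker_mulVec_vec, transpose_one, Matrix.mul_one]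
  rfl

variable [DecidableEq κ]

theorem commute_one_kronecker_add_kronecker_kronecker_one (X Y : Matrix κ κ K)
    (W : Matrix ι ι K) :
    Commute ((1 : Matrix ι ι K) ⊗ₖ X + W ⊗ₖ Y) (W ⊗ₖ (1 : Matrix κ κ K)) := by
  simp only [Commute, SemiconjBy, Matrix.add_mul, Matrix.mul_add, ← mul_kronecker_mul,
    Matrix.one_mul, Matrix.mul_one]

theorem isRoot_charpoly_one_kronecker_add_kronecker_of_isRoot {X Y : Matrix κ κ K}
    {W : Matrix ι ι K} {μ z : K} (hμ : W.charpoly.IsRoot μ) (hz : (X + μ • Y).charpoly.IsRoot z) :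
    ((1 : Matrix ι ι K) ⊗ₖ X + W ⊗ₖ Y).charpoly.IsRoot z := by
  obtain ⟨c, hc0, hc⟩ := isRoot_charpoly_iff_exists_mulVec_eq_smul.mp hμ
  obtain ⟨r, hr0, hr⟩ := isRoot_charpoly_iff_exists_mulVec_eq_smul.mp hz
  refine isRoot_charpoly_iff_exists_mulVec_eq_smul.mpr ⟨vec (vecMulVec r c), ?_, ?_⟩
  · obtain ⟨k, hk⟩ := Function.ne_iff.mp hr0
    obtain ⟨i, hi⟩ := Function.ne_iff.mp hc0
    exact Function.ne_iff.mpr ⟨(i, k), mul_ne_zero hk hi⟩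
  · rw [one_kronecker_add_kronecker_mulVec_vec, ← vec_smul, mul_vecMulVec, mul_vecMulVec,
      vecMulVec_mul, vecMul_transpose, hc, vecMulVec_smul, ← smul_vecMulVec, ← add_vecMulVec,
      ← smul_mulVec, ← add_mulVec, hr, smul_vecMulVec]

theorem exists_isRoot_of_isRoot_charpoly_one_kronecker_add_kronecker [IsAlgClosed K]
    {X Y : Matrix κ κ K} {W : Matrix ι ι K} {z : K}
    (hz : ((1 : Matrix ι ι K) ⊗ₖ X + W ⊗ₖ Y).charpoly.IsRoot z) :
    ∃ μ, W.charpoly.IsRoot μ ∧ (X + μ • Y).charpoly.IsRoot z := by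
  obtain ⟨μ, v, hv, hWv⟩ := Module.End.exists_hasEigenvector_of_commute (g := toLin' (W ⊗ₖ 1))
    ((commute_one_kronecker_add_kronecker_kronecker_one X Y W).map toLinAlgEquiv')
    (isRoot_charpoly_iff_hasEigenvalue_toLin'.mp hz)
  obtain ⟨V, rfl⟩ := vec_bijective.surjective v
  rw [hasEigenvector_toLin'_iff, one_kronecker_add_kronecker_mulVec_vec, ← vec_smul, vec_inj] at hv
  rw [hasEigenvector_toLin'_iff, kronecker_mulVec_vec, ← vec_smul, vec_inj, Matrix.one_mul] at hWv
  have hV0 : V ≠ 0 := fun h => hv.2 (by rw [h, vec_zero])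
  refine ⟨μ, isRoot_charpoly_of_mul_eq_smul (mt transpose_eq_zero.mp hV0) ?_,
    isRoot_charpoly_of_mul_eq_smul hV0 ?_⟩
  · simpa [transpose_mul] using congrArg transpose hWv.1
  · rw [← hv.1, Matrix.add_mul, Matrix.mul_assoc Y, hWv.1, Matrix.mul_smul, Matrix.smul_mul]

end Kronecker

end Matrix

theorem stmt4 (n p : ℕ) (X Y : Matrix (Fin n) (Fin n) ℂ)
    (W : Matrix (Fin p) (Fin p) ℂ) (z : ℂ) :
    ((1 : Matrix (Fin p) (Fin p) ℂ) ⊗ₖ X + W ⊗ₖ Y).charpoly.IsRoot z ↔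
      ∃ μ : ℂ, W.charpoly.IsRoot μ ∧ (X + μ • Y).charpoly.IsRoot z :=
  ⟨exists_isRoot_of_isRoot_charpoly_one_kronecker_add_kronecker,
    fun ⟨_, hμ, hz⟩ => isRoot_charpoly_one_kronecker_add_kronecker_of_isRoot hμ hz⟩
end

section
/- Let P(N),…,P(0) be the solution of the RDE and suppose Q_N − P(N−1) is positive definite. Then the closed-loop matrix A − B(R + BᵀP(1)B)⁻¹BᵀP(1)A is Schur stable, i.e., all of its (complex) eigenvalues have modulus strictly less than 1. -/
/-! For `X ⪰ 0` the Riccati map is the closed-loop cost `(A - B L)ᵀ X (A - B L) + Lᵀ R L + Q`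
at the gain `L = K(X) = (R + Bᵀ X B)⁻¹ Bᵀ X A`, and by completing the square (Woodbury identity)
any other gain costs more by `(L - K)ᵀ (R + Bᵀ X B) (L - K)`. As a minimum of maps monotone in
`X`, the Riccati map is monotone in the Loewner order, so `P(N - 1) ⪯ P(N)` propagates down the
recursion to `P(0) ⪯ P(1)`. With `A_K = A - B K(P(1))` this is the Lyapunov inequality
`P(1) - A_Kᵀ P(1) A_K = (P(1) - P(0)) + Kᵀ R K + Q ≻ 0`; evaluated at a complex eigenvector `v`
of `A_K` with eigenvalue `z` it reads `(1 - |z|²) v* P(1) v > 0`, hence `|z| < 1`. -/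

open Matrix

section

lemma Matrix.PosSemidef.transpose_mul_mul_same {ι κ : Type*} [Fintype ι] [Fintype κ]
    {X : Matrix ι ι ℝ} (hX : X.PosSemidef) (C : Matrix ι κ ℝ) : (Cᵀ * X * C).PosSemidef := by
  simpa using hX.conjTranspose_mul_mul_same C

variable {ι : Type*} [Fintype ι]

lemma Matrix.exists_mulVec_eq_smul_of_isRoot_charpoly {K : Type*} [Field K]
    [DecidableEq ι] {M : Matrix ι ι K} {z : K} (hz : M.charpoly.IsRoot z) :
    ∃ v ≠ 0, M *ᵥ v = z • v := by
  obtain ⟨v, hv⟩ := ((Module.End.hasEigenvalue_iff_isRoot_charpoly M.mulVecLin z).mpr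
    (by rwa [charpoly_mulVecLin])).exists_hasEigenvector
  obtain ⟨hmem, hv0⟩ := Module.End.hasEigenvector_iff.mp hv
  exact ⟨v, hv0, by simpa using Module.End.mem_eigenspace_iff.mp hmem⟩

lemma Matrix.re_star_dotProduct_map_ofReal_mulVec (X : Matrix ι ι ℝ) (v : ι → ℂ) :
    (star v ⬝ᵥ (X.map (↑) *ᵥ v)).re
      = (fun i ↦ (v i).re) ⬝ᵥ (X *ᵥ fun i ↦ (v i).re)
        + (fun i ↦ (v i).im) ⬝ᵥ (X *ᵥ fun i ↦ (v i).im) := by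
  simp only [dotProduct, mulVec, map_apply, Pi.star_apply, Complex.re_sum, Finset.mul_sum,
    ← Finset.sum_add_distrib]
  refine Finset.sum_congr rfl fun i _ ↦ Finset.sum_congr rfl fun j _ ↦ ?_
  simp only [Complex.mul_re, Complex.mul_im, RCLike.star_def, Complex.conj_re, Complex.conj_im,
    Complex.ofReal_re, Complex.ofReal_im]
  ring

lemma Matrix.PosDef.re_star_dotProduct_map_ofReal_mulVec_pos {X : Matrix ι ι ℝ} (hX : X.PosDef)
    {v : ι → ℂ} (hv : v ≠ 0) : 0 < (star v ⬝ᵥ (X.map (↑) *ᵥ v)).re := by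
  rw [re_star_dotProduct_map_ofReal_mulVec]
  have hre := hX.posSemidef.dotProduct_mulVec_nonneg fun i ↦ (v i).re
  have him := hX.posSemidef.dotProduct_mulVec_nonneg fun i ↦ (v i).im
  simp only [star_trivial] at hre him
  by_cases h : (fun i ↦ (v i).re) = 0
  · have h' : (fun i ↦ (v i).im) ≠ 0 := fun h' ↦ hv <| funext fun i ↦
      Complex.ext (congrFun h i) (congrFun h' i)
    simpa using add_lt_add_of_le_of_lt hre (hX.dotProduct_mulVec_pos h')
  · simpa using add_lt_add_of_lt_of_le (hX.dotProduct_mulVec_pos h) him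

lemma Matrix.norm_lt_one_of_posDef_sub_transpose_mul_mul [DecidableEq ι] {M P : Matrix ι ι ℝ}
    (hP : P.PosDef) (hMP : (P - Mᵀ * P * M).PosDef) {z : ℂ}
    (hz : (M.map (↑)).charpoly.IsRoot z) : ‖z‖ < 1 := by
  obtain ⟨v, hv0, hv⟩ := exists_mulVec_eq_smul_of_isRoot_charpoly hz
  set q : Matrix ι ι ℝ → ℝ := fun X ↦ (star v ⬝ᵥ (X.map (↑) *ᵥ v)).re
  have hq_sub : q (P - Mᵀ * P * M) = q P - q (Mᵀ * P * M) := by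
    simp [q, Matrix.map_sub, sub_mulVec]
  have hq_conj : q (Mᵀ * P * M) = ‖z‖ ^ 2 * q P := by
    have hmap :
        (Mᵀ * P * M).map ((↑) : ℝ → ℂ) = (M.map (↑))ᴴ * P.map (↑) * M.map (↑) := by
      rw [show ((↑) : ℝ → ℂ) = ⇑Complex.ofRealHom from rfl, Matrix.map_mul, Matrix.map_mul,
        ← conjTranspose_eq_transpose_of_trivial,
        conjTranspose_map (⇑Complex.ofRealHom) fun r ↦ (Complex.conj_ofReal r).symm]
    have hform : star v ⬝ᵥ ((Mᵀ * P * M).map (↑) *ᵥ v)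
        = (‖z‖ ^ 2 : ℝ) * (star v ⬝ᵥ (P.map (↑) *ᵥ v)) := by
      rw [hmap, Matrix.mul_assoc, ← mulVec_mulVec, dotProduct_mulVec, ← star_mulVec,
        ← mulVec_mulVec, hv, mulVec_smul, star_smul, smul_dotProduct, dotProduct_smul,
        smul_smul, smul_eq_mul, RCLike.star_def, Complex.conj_mul']
      norm_cast
    simp only [q, hform, Complex.re_ofReal_mul]
  have hqP : 0 < q P := hP.re_star_dotProduct_map_ofReal_mulVec_pos hv0
  have hqMP : 0 < q (P - Mᵀ * P * M) := hMP.re_star_dotProduct_map_ofReal_mulVec_pos hv0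
  rw [hq_sub, hq_conj, ← one_sub_mul] at hqMP
  exact (sq_lt_one_iff₀ (norm_nonneg z)).mp (by linarith [pos_of_mul_pos_left hqMP hqP.le])

end

namespace Riccati

variable {ι κ : Type*} [Fintype ι] [Fintype κ]
  (A : Matrix ι ι ℝ) (B : Matrix ι κ ℝ) (Q : Matrix ι ι ℝ) (R : Matrix κ κ ℝ)

def cost (X : Matrix ι ι ℝ) (L : Matrix κ ι ℝ) : Matrix ι ι ℝ :=
  (A - B * L)ᵀ * X * (A - B * L) + Lᵀ * R * L + Q

variable {A B Q R} {X Y : Matrix ι ι ℝ}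

lemma posDef_add_transpose_mul_mul (hR : R.PosDef) (hX : X.PosSemidef) :
    (R + Bᵀ * X * B).PosDef :=
  hR.add_posSemidef (hX.transpose_mul_mul_same B)

lemma cost_sub_cost (L : Matrix κ ι ℝ) :
    cost A B Q R Y L - cost A B Q R X L = (A - B * L)ᵀ * (Y - X) * (A - B * L) := by
  simp only [cost, Matrix.mul_sub, Matrix.sub_mul]
  abel

variable (A B Q R) [DecidableEq ι] [DecidableEq κ]

noncomputable def map (X : Matrix ι ι ℝ) : Matrix ι ι ℝ :=
  Aᵀ * (1 + X * B * R⁻¹ * Bᵀ)⁻¹ * X * A + Q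

noncomputable def gain (X : Matrix ι ι ℝ) : Matrix κ ι ℝ :=
  (R + Bᵀ * X * B)⁻¹ * Bᵀ * X * A

variable {A B Q R}

lemma inv_one_add_mul_inv_mul (hR : R.PosDef) (hX : X.PosSemidef) :
    (1 + X * B * R⁻¹ * Bᵀ)⁻¹ = 1 - X * B * (R + Bᵀ * X * B)⁻¹ * Bᵀ := by
  have hRR : R⁻¹⁻¹ = R := nonsing_inv_nonsing_inv _ ((isUnit_iff_isUnit_det R).mp hR.isUnit)
  have := add_mul_mul_inv_eq_sub 1 (X * B) R⁻¹ Bᵀ isUnit_one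
    (isUnit_nonsing_inv_iff.mpr hR.isUnit)
    (by simpa [hRR, Matrix.mul_assoc] using (posDef_add_transpose_mul_mul hR hX).isUnit)
  simpa [hRR, Matrix.mul_assoc] using this

lemma cost_eq_map_add (hR : R.PosDef) (hX : X.PosSemidef) (L : Matrix κ ι ℝ) :
    cost A B Q R X L = map A B Q R X
      + (L - gain A B R X)ᵀ * (R + Bᵀ * X * B) * (L - gain A B R X) := by
  have hSpd := posDef_add_transpose_mul_mul (B := B) hR hX
  set S := R + Bᵀ * X * B with hS
  set K := gain A B R X
  have hSdet : IsUnit S.det := (isUnit_iff_isUnit_det S).mp hSpd.isUnit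
  have hXt : Xᵀ = X := by rw [← conjTranspose_eq_transpose_of_trivial]; exact hX.isHermitian
  have hSt : Sᵀ = S := by rw [← conjTranspose_eq_transpose_of_trivial]; exact hSpd.isHermitian
  have hSK : S * K = Bᵀ * X * A := by
    rw [show K = S⁻¹ * (Bᵀ * X * A) by
        simp only [K, gain, Matrix.mul_assoc (R + Bᵀ * X * B)⁻¹]; rfl,
      mul_nonsing_inv_cancel_left _ _ hSdet]
  have hKS : Kᵀ * S = Aᵀ * X * B := by
    simpa [hSt, hXt, Matrix.mul_assoc] using congrArg transpose hSK
  have hmap : map A B Q R X = Aᵀ * X * A - Kᵀ * S * K + Q := by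
    rw [map, inv_one_add_mul_inv_mul hR hX, ← hS,
      show Aᵀ * (1 - X * B * S⁻¹ * Bᵀ) * X * A
          = Aᵀ * X * A - Aᵀ * X * B * S⁻¹ * (Bᵀ * X * A) by
        simp only [Matrix.mul_sub, Matrix.sub_mul, Matrix.mul_one, Matrix.mul_assoc],
      ← hKS, ← hSK, mul_nonsing_inv_cancel_right _ _ hSdet, ← Matrix.mul_assoc Kᵀ S K]
  have hcost : cost A B Q R X L = Aᵀ * X * A - Lᵀ * (Bᵀ * X * A) - Aᵀ * X * B * L
      + Lᵀ * (Bᵀ * X * B) * L + Lᵀ * R * L + Q := by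
    simp only [cost, transpose_sub, transpose_mul, Matrix.mul_sub, Matrix.sub_mul,
      Matrix.mul_assoc]
    abel
  rw [hcost, hmap, ← hSK, ← hKS, show Bᵀ * X * B = S - R by rw [hS]; abel]
  simp only [transpose_sub, Matrix.mul_sub, Matrix.sub_mul, Matrix.mul_assoc]
  abel

lemma map_eq_cost_gain (hR : R.PosDef) (hX : X.PosSemidef) :
    map A B Q R X = cost A B Q R X (gain A B R X) := by
  simp [cost_eq_map_add hR hX]

lemma posDef_map (hR : R.PosDef) (hQ : Q.PosDef) (hX : X.PosSemidef) :
    (map A B Q R X).PosDef := by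
  rw [map_eq_cost_gain hR hX, cost]
  exact PosDef.posSemidef_add ((hX.transpose_mul_mul_same _).add
    (hR.posSemidef.transpose_mul_mul_same _)) hQ

lemma posSemidef_map_sub_map (hR : R.PosDef) (hX : X.PosSemidef) (hY : Y.PosSemidef)
    (hXY : (Y - X).PosSemidef) : (map A B Q R Y - map A B Q R X).PosSemidef := by
  set L := gain A B R Y
  have hmin : (cost A B Q R X L - map A B Q R X).PosSemidef := by
    rw [cost_eq_map_add hR hX, add_sub_cancel_left]
    exact (posDef_add_transpose_mul_mul hR hX).posSemidef.transpose_mul_mul_same _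
  have hstate : (cost A B Q R Y L - cost A B Q R X L).PosSemidef := by
    rw [cost_sub_cost]
    exact hXY.transpose_mul_mul_same _
  rw [show map A B Q R Y - map A B Q R X
      = (cost A B Q R Y L - cost A B Q R X L) + (cost A B Q R X L - map A B Q R X) by
    rw [map_eq_cost_gain hR hY]; abel]
  exact hstate.add hmin

lemma posDef_sub_closedLoop (hR : R.PosDef) (hQ : Q.PosDef) (hX : X.PosSemidef)
    (hXmap : (X - map A B Q R X).PosSemidef) :
    (X - (A - B * gain A B R X)ᵀ * X * (A - B * gain A B R X)).PosDef := by
  rw [show X - (A - B * gain A B R X)ᵀ * X * (A - B * gain A B R X)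
      = (X - map A B Q R X) + (gain A B R X)ᵀ * R * gain A B R X + Q by
    rw [map_eq_cost_gain hR hX, cost]; abel]
  exact PosDef.posSemidef_add (hXmap.add (hR.posSemidef.transpose_mul_mul_same _)) hQ

variable {P : ℕ → Matrix ι ι ℝ} {N : ℕ}

lemma posDef_of_recursion (hR : R.PosDef) (hQ : Q.PosDef)
    (hP : ∀ k < N, P k = map A B Q R (P (k + 1))) (hPN : (P N).PosDef) :
    ∀ k ≤ N, (P k).PosDef := by
  intro k hk
  induction hk using Nat.decreasingInduction with
  | self => exact hPN
  | of_succ k hk ih => rw [hP k hk]; exact posDef_map hR hQ ih.posSemidef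

lemma posSemidef_succ_sub_of_recursion (hR : R.PosDef) (hQ : Q.PosDef)
    (hP : ∀ k < N, P k = map A B Q R (P (k + 1))) (hPN : (P N).PosDef) (hN : 1 ≤ N)
    (hlast : (P N - P (N - 1)).PosSemidef) : ∀ k < N, (P (k + 1) - P k).PosSemidef := by
  have hpos := posDef_of_recursion hR hQ hP hPN
  intro k hk
  induction Nat.le_sub_one_of_lt hk using Nat.decreasingInduction with
  | self => rwa [Nat.sub_add_cancel hN]
  | of_succ k hk ih =>
    have h := posSemidef_map_sub_map (A := A) (B := B) (Q := Q) hR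
      (hpos (k + 1) (by omega)).posSemidef (hpos (k + 2) (by omega)).posSemidef (ih (by omega))
    rwa [← hP (k + 1) (by omega), ← hP k (by omega)] at h

end Riccati

theorem stmt8 (n m N : ℕ) (hN : 1 ≤ N)
    (A : Matrix (Fin n) (Fin n) ℝ) (B : Matrix (Fin n) (Fin m) ℝ)
    (Q QN : Matrix (Fin n) (Fin n) ℝ) (R : Matrix (Fin m) (Fin m) ℝ)
    (hQ : Q.PosDef) (hQN : QN.PosDef) (hR : R.PosDef)
    (P : ℕ → Matrix (Fin n) (Fin n) ℝ)
    (hPN : P N = QN)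
    (hPrec : ∀ k < N,
      P k = Aᵀ * (1 + P (k + 1) * B * R⁻¹ * Bᵀ)⁻¹ * P (k + 1) * A + Q)
    (hmono : (QN - P (N - 1)).PosDef) :
    ∀ z : ℂ,
      ((A - B * ((R + Bᵀ * P 1 * B)⁻¹ * Bᵀ * P 1 * A)).map
          Complex.ofReal).charpoly.IsRoot z →
        ‖z‖ < 1 := by
  intro z hz
  have hP : ∀ k < N, P k = Riccati.map A B Q R (P (k + 1)) := hPrec
  rw [← hPN] at hQN hmono
  have hP1 : (P 1).PosDef := Riccati.posDef_of_recursion hR hQ hP hQN 1 hN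
  have hP01 : (P 1 - Riccati.map A B Q R (P 1)).PosSemidef := by
    simpa [← hP 0 (by omega)] using
      Riccati.posSemidef_succ_sub_of_recursion hR hQ hP hQN hN hmono.posSemidef 0 (by omega)
  exact Matrix.norm_lt_one_of_posDef_sub_transpose_mul_mul hP1
    (Riccati.posDef_sub_closedLoop hR hQ hP1.posSemidef hP01) hz
end
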